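/- arXiv:2604.13008 — 7 statements merged into one kernel-verified Lean document; each statement's English description precedes it below -/
import Mathlib

section
/- Let m be a natural number, δ > 0 a real, and π_j ∈ (0,1) for each j : Fin m. Define the Bernoulli product mass π(a) := ∏_{j} (π_j if a_j = true, else 1 − π_j) for a : Fin m → Bool, s(a) := card{j : a_j = true}, and the CPS weight H_δ(a) := δ^{s(a)}·π(a) / Σ_{a'} δ^{s(a')}·π(a'). Then for every a : Fin m → Bool, H_δ(a) = ∏_{j} (π_j^δ if a_j = true, else 1 − π_j^δ), where π_j^δ := δπ_j/(1 − π_j + δπ_j). That is, under within-cluster independence of treatment assignments, the cluster-level incremental propensity score policy coincides with the individual-level incremental propensity score policy. -/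
/-!
Tilting by `δ ^ s(a)` multiplies each treated factor `π_j` by `δ`, so the tilted mass is again a
product of per-coordinate weights `δ π_j` and `1 - π_j`. The normalising sum over `a'` of a
product factorises as the product of the per-coordinate sums `δ π_j + (1 - π_j)`, and dividing
factor by factor gives the product of Bernoulli masses with parameter `π_j^δ`.
-/

open Finset

theorem pow_card_filter_mul_prod_ite {ι M : Type*} [Fintype ι] [CommMonoid M] (a : ι → Bool)
    (c : M) (p q : ι → M) :
    c ^ (univ.filter (fun j => a j = true)).card * ∏ j, (if a j = true then p j else q j) =
      ∏ j, (if a j = true then c * p j else q j) := by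
  rw [prod_ite, prod_ite, prod_mul_distrib, prod_const, mul_assoc]

theorem prod_div_sum_prod {ι β K : Type*} [Fintype ι] [DecidableEq ι] [Fintype β] [Field K]
    (f : ι → β → K) (a : ι → β) :
    (∏ j, f j (a j)) / ∑ a' : ι → β, ∏ j, f j (a' j) = ∏ j, f j (a j) / ∑ b, f j b := by
  rw [← Fintype.prod_sum, prod_div_distrib]

theorem ite_div_add_eq_ite_one_sub {K : Type*} [Field K] (b : Bool) {x y : K} (h : y + x ≠ 0) :
    (if b = true then x else y) / (x + y) = if b = true then x / (y + x) else 1 - x / (y + x) := by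
  rw [add_comm x y]
  cases b
  · rw [one_sub_div h, add_sub_cancel_right]; rfl
  · rfl

/-- Under within-cluster independence of treatment assignments, the cluster-level
incremental propensity score policy coincides with the individual-level incremental
propensity score policy: with Bernoulli product mass `π(a) = ∏_j (π_j if a_j else 1 − π_j)`,
`s(a)` the number of treated coordinates, and CPS weight
`H_δ(a) = δ^{s(a)} π(a) / ∑_{a'} δ^{s(a')} π(a')`, one has
`H_δ(a) = ∏_j (π_j^δ if a_j else 1 − π_j^δ)` where `π_j^δ = δπ_j/(1 − π_j + δπ_j)`. -/
theorem cps_eq_ips_under_independence (m : ℕ) (δ : ℝ) (hδ : 0 < δ) (π : Fin m → ℝ)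
    (hπ : ∀ j, 0 < π j ∧ π j < 1) (a : Fin m → Bool) :
    (δ ^ (univ.filter (fun j => a j = true)).card *
        ∏ j : Fin m, (if a j = true then π j else 1 - π j)) /
      (∑ a' : Fin m → Bool,
        δ ^ (univ.filter (fun j => a' j = true)).card *
          ∏ j : Fin m, (if a' j = true then π j else 1 - π j))
      = ∏ j : Fin m,
          (if a j = true then δ * π j / (1 - π j + δ * π j)
            else 1 - δ * π j / (1 - π j + δ * π j)) := by
  have hden : ∀ j, 1 - π j + δ * π j ≠ 0 := fun j =>
    (add_pos (sub_pos.2 (hπ j).2) (mul_pos hδ (hπ j).1)).ne'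
  simp only [pow_card_filter_mul_prod_ite]
  rw [prod_div_sum_prod (fun j b => if b = true then δ * π j else 1 - π j)]
  refine prod_congr rfl fun j _ => ?_
  rw [Fintype.sum_bool]
  exact ite_div_add_eq_ite_one_sub (a j) (hden j)
end

section
/- Let (Ω, ℱ, μ) be a probability space, 𝔪 ⊆ ℱ a sub-σ-algebra, 𝒜 a finite nonempty type, A : Ω → 𝒜 a measurable map, and Z : Ω → ℝ a bounded measurable function. Fix a ∈ 𝒜. Suppose Z and A are conditionally independent given 𝔪, and suppose π_a : Ω → ℝ is an 𝔪-measurable version of the conditional expectation μ[1{A = a} | 𝔪] satisfying π_a(ω) ≥ c for some constant c > 0 and all ω. Then ∫ 1{A(ω) = a}·Z(ω)/π_a(ω) dμ(ω) = ∫ Z dμ. -/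
open MeasureTheory ProbabilityTheory
open scoped ENNReal NNReal

lemma integral_mul_condexp' {Ω : Type*} [mΩ : MeasurableSpace Ω] (μ : Measure Ω)
    [IsFiniteMeasure μ] (𝔪 : MeasurableSpace Ω) (h𝔪 : 𝔪 ≤ mΩ) (W f : Ω → ℝ)
    (hW : StronglyMeasurable[𝔪] W) (b : ℝ) (hWb : ∀ ω, |W ω| ≤ b)
    (hf : Integrable f μ) :
    ∫ ω, W ω * (μ[f|𝔪]) ω ∂μ = ∫ ω, W ω * f ω ∂μ := by
  have hWf : Integrable (fun ω => W ω * f ω) μ :=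
    hf.bdd_mul ((hW.mono h𝔪).aestronglyMeasurable) (Filter.Eventually.of_forall fun ω => by
      simpa [Real.norm_eq_abs] using hWb ω)
  have h1 : μ[(fun ω => W ω * f ω)|𝔪] =ᵐ[μ] fun ω => W ω * (μ[f|𝔪]) ω :=
    condExp_mul_of_stronglyMeasurable_left hW hWf hf
  rw [← integral_congr_ae h1, integral_condExp h𝔪]


/-- Inverse-probability-weighting identity: if `Z` and `A` are conditionally independent
given a sub-σ-algebra `𝔪`, and `π_a` is an `𝔪`-measurable version of
`μ[1{A = a} | 𝔪]` bounded below by `c > 0`, then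
`∫ 1{A = a} Z / π_a dμ = ∫ Z dμ`. -/
theorem ipw_identity {Ω : Type*} (𝔪 : MeasurableSpace Ω) [mΩ : MeasurableSpace Ω] [StandardBorelSpace Ω]
    (μ : Measure Ω) [IsProbabilityMeasure μ]
    (h𝔪 : 𝔪 ≤ mΩ)
    {𝒜 : Type*} [Fintype 𝒜] [Nonempty 𝒜] [DecidableEq 𝒜] [MeasurableSpace 𝒜] [MeasurableSingletonClass 𝒜]
    (A : Ω → 𝒜) (hA : Measurable A)
    (Z : Ω → ℝ) (hZ : Measurable Z) (C : ℝ) (hZb : ∀ ω, |Z ω| ≤ C)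
    (a : 𝒜)
    (hCI : CondIndepFun 𝔪 h𝔪 Z A μ)
    (πa : Ω → ℝ) (hπmeas : Measurable[𝔪] πa)
    (hπver : πa =ᵐ[μ] μ[fun ω => if A ω = a then (1 : ℝ) else 0 | 𝔪])
    (c : ℝ) (hc : 0 < c) (hπc : ∀ ω, c ≤ πa ω) :
    ∫ ω, (if A ω = a then (1 : ℝ) else 0) * Z ω / πa ω ∂μ = ∫ ω, Z ω ∂μ := by
  letI : MeasurableSpace Ω := mΩ
  classical
  set s : Set Ω := A ⁻¹' {a} with hs_def
  set ind : Set Ω → Ω → ℝ := fun u => u.indicator (fun _ => (1 : ℝ)) with hind_def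
  have hA' : Measurable[mΩ] A := hA
  have hZ' : Measurable[mΩ] Z := hZ
  have hs : MeasurableSet[mΩ] s := hA' (measurableSet_singleton a)
  have hπpos : ∀ ω, (0 : ℝ) < πa ω := fun ω => lt_of_lt_of_le hc (hπc ω)
  have hπne : ∀ ω, πa ω ≠ 0 := fun ω => (hπpos ω).ne'
  set g : Ω → ℝ := fun ω => (if A ω = a then (1 : ℝ) else 0) / πa ω with hg_def
  have hg_nonneg : ∀ ω, 0 ≤ g ω := fun ω =>
    div_nonneg (by split <;> norm_num) (hπpos ω).le
  have hg_le : ∀ ω, g ω ≤ c⁻¹ := fun ω => by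
    rw [← one_div]
    exact div_le_div₀ (by norm_num) (by split <;> norm_num) hc (hπc ω)
  have hπmeas' : Measurable[mΩ] πa := hπmeas.mono h𝔪 le_rfl
  have hg_meas : Measurable[mΩ] g :=
    (Measurable.ite (hA' (measurableSet_singleton a)) measurable_const measurable_const).div hπmeas'
  have hg_int : Integrable g μ := by
    refine Integrable.mono' (integrable_const c⁻¹) hg_meas.aestronglyMeasurable ?_
    exact Filter.Eventually.of_forall fun ω => by
      rw [Real.norm_eq_abs, abs_of_nonneg (hg_nonneg ω)]; exact hg_le ω
  have hind_eq : (fun ω => if A ω = a then (1 : ℝ) else 0) = ind s := by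
    funext ω; simp [hind_def, Set.indicator_apply, hs_def]
  have key : ∀ t : Set ℝ, MeasurableSet t →
      ∫ ω in Z ⁻¹' t, g ω ∂μ = (μ (Z ⁻¹' t)).toReal := by
    intro t ht
    have hB : MeasurableSet[mΩ] (Z ⁻¹' t) := hZ' ht
    have e1 : ∫ ω in Z ⁻¹' t, g ω ∂μ
        = ∫ ω, (πa ω)⁻¹ * ind (s ∩ Z ⁻¹' t) ω ∂μ := by
      rw [← integral_indicator (μ := μ) hB]
      congr 1
      funext ω
      simp only [hind_def, Set.indicator_apply, Set.mem_inter_iff, Set.mem_preimage,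
        hs_def, hg_def, Set.mem_singleton_iff]
      by_cases h1 : A ω = a <;> by_cases h2 : Z ω ∈ t <;>
        simp [h1, h2, div_eq_inv_mul]
    have hWb : ∀ ω, |(πa ω)⁻¹| ≤ c⁻¹ := fun ω => by
      rw [abs_of_nonneg (inv_nonneg.mpr (hπpos ω).le)]
      exact inv_anti₀ hc (hπc ω)
    have hind_int : Integrable (ind (s ∩ Z ⁻¹' t)) μ :=
      (integrable_const (1 : ℝ)).indicator (hs.inter hB)
    have e2 : ∫ ω, (πa ω)⁻¹ * ind (s ∩ Z ⁻¹' t) ω ∂μ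
        = ∫ ω, (πa ω)⁻¹ * (μ[ind (s ∩ Z ⁻¹' t)|𝔪]) ω ∂μ :=
      (integral_mul_condexp' μ 𝔪 h𝔪 _ _ hπmeas.inv.stronglyMeasurable c⁻¹ hWb hind_int).symm
    have hCI' := (condIndepFun_iff 𝔪 h𝔪 Z A hZ' hA' μ).mp hCI (Z ⁻¹' t) s
      ⟨t, ht, rfl⟩ ⟨{a}, measurableSet_singleton a, rfl⟩
    have hπver' : (μ[ind s|𝔪]) =ᵐ[μ] πa := by
      rw [← hind_eq]; exact hπver.symm
    have e3 : (fun ω => (πa ω)⁻¹ * (μ[ind (s ∩ Z ⁻¹' t)|𝔪]) ω)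
        =ᵐ[μ] (μ[ind (Z ⁻¹' t)|𝔪]) := by
      have hset : s ∩ Z ⁻¹' t = Z ⁻¹' t ∩ s := Set.inter_comm _ _
      rw [hset]
      simp only [hind_def]
      filter_upwards [hCI', hπver'] with ω h1 h2
      rw [h1]
      simp only [Pi.mul_apply]
      rw [h2, mul_comm, mul_assoc, mul_inv_cancel₀ (hπne ω), mul_one]
    rw [e1, e2, integral_congr_ae e3, integral_condExp h𝔪]
    exact integral_indicator_one hB
  set ν : Measure Ω := μ.withDensity (fun ω => ((g ω).toNNReal : ℝ≥0∞)) with hν_def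
  have hmap : ν.map Z = μ.map Z := by
    ext t ht
    rw [Measure.map_apply hZ' ht, Measure.map_apply hZ' ht, hν_def,
      withDensity_apply _ (hZ' ht)]
    have : ∫⁻ ω in Z ⁻¹' t, ((g ω).toNNReal : ℝ≥0∞) ∂μ
        = ENNReal.ofReal (∫ ω in Z ⁻¹' t, g ω ∂μ) := by
      rw [ofReal_integral_eq_lintegral_ofReal hg_int.restrict
        (Filter.Eventually.of_forall hg_nonneg)]
      rfl
    rw [this, key t ht, ENNReal.ofReal_toReal (measure_ne_top μ _)]
  have hint1 : ∫ ω, Z ω ∂ν = ∫ ω, g ω * Z ω ∂μ := by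
    rw [hν_def, integral_withDensity_eq_integral_smul (hg_meas.real_toNNReal) Z]
    congr 1
    funext ω
    rw [NNReal.smul_def, Real.coe_toNNReal _ (hg_nonneg ω), smul_eq_mul]
  have hint2 : ∫ ω, Z ω ∂ν = ∫ ω, Z ω ∂μ := by
    have h1 : ∫ ω, Z ω ∂ν = ∫ x, x ∂(ν.map Z) :=
      (integral_map hZ'.aemeasurable aestronglyMeasurable_id).symm
    have h2 : ∫ ω, Z ω ∂μ = ∫ x, x ∂(μ.map Z) :=
      (integral_map hZ'.aemeasurable aestronglyMeasurable_id).symm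
    rw [h1, h2, hmap]
  have hfin : ∫ ω, g ω * Z ω ∂μ = ∫ ω, Z ω ∂μ := by rw [← hint1, hint2]
  rw [← hfin]
  congr 1
  funext ω
  rw [hg_def]
  ring
end

section
/- Let (Ω, ℱ, μ) be a probability space, 𝔪 ⊆ ℱ a sub-σ-algebra, 𝒜 a finite nonempty type, A : Ω → 𝒜 a measurable map, and Y : 𝒜 → Ω → ℝ a family of measurable potential outcomes. Define the observed outcome Y^obs(ω) := Y(A(ω))(ω). Fix a ∈ 𝒜 and θ ∈ ℝ. Suppose Y(a) and A are conditionally independent given 𝔪, and suppose π_a : Ω → ℝ is an 𝔪-measurable version of the conditional expectation μ[1{A = a} | 𝔪] satisfying π_a(ω) ≥ c for some constant c > 0 and all ω. Then ∫ 1{A(ω) = a}·1{Y^obs(ω) ≤ θ}/π_a(ω) dμ(ω) = μ({ω : Y(a)(ω) ≤ θ}); that is, the inverse-probability-weighted observed threshold outcome identifies the counterfactual cumulative distribution function. -/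
open MeasureTheory ProbabilityTheory

lemma ipw_aux_integrable_indicator {Ω : Type*} (mΩ : MeasurableSpace Ω) (μ : Measure Ω)
    [IsFiniteMeasure μ] {s : Set Ω} (hs : MeasurableSet s) :
    Integrable (s.indicator fun _ => (1 : ℝ)) μ :=
  (integrable_const (1 : ℝ)).indicator hs

lemma ipw_aux_integral_indicator {Ω : Type*} (mΩ : MeasurableSpace Ω) (μ : Measure Ω)
    {s : Set Ω} (hs : MeasurableSet s) :
    ∫ ω, s.indicator (fun _ => (1 : ℝ)) ω ∂μ = (μ s).toReal := by
  rw [integral_indicator hs, setIntegral_const, smul_eq_mul, mul_one]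
  rfl

/-- The inverse-probability-weighted observed threshold outcome identifies the
counterfactual cumulative distribution function: under treatment ignorability
(`Y(a) ⟂ A | 𝔪`) and overlap (`π_a ≥ c > 0`, `π_a` an `𝔪`-measurable version of
`μ[1{A = a} | 𝔪]`), for the observed outcome `Y^obs(ω) = Y (A ω) ω`,
`∫ 1{A = a} 1{Y^obs ≤ θ} / π_a dμ = μ{ω : Y a ω ≤ θ}`. -/
theorem ipw_identifies_counterfactual_cdf {Ω : Type*} (𝔪 : MeasurableSpace Ω) [mΩ : MeasurableSpace Ω]
    [StandardBorelSpace Ω] (μ : Measure Ω) [IsProbabilityMeasure μ]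
    (h𝔪 : 𝔪 ≤ mΩ)
    {𝒜 : Type*} [Fintype 𝒜] [Nonempty 𝒜] [DecidableEq 𝒜] [MeasurableSpace 𝒜]
    [MeasurableSingletonClass 𝒜]
    (A : Ω → 𝒜) (hA : Measurable A)
    (Y : 𝒜 → Ω → ℝ) (hY : ∀ a, Measurable (Y a))
    (a : 𝒜) (θ : ℝ)
    (hCI : CondIndepFun 𝔪 h𝔪 (Y a) A μ)
    (πa : Ω → ℝ) (hπmeas : Measurable[𝔪] πa)
    (hπver : πa =ᵐ[μ] μ[fun ω => if A ω = a then (1 : ℝ) else 0 | 𝔪])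
    (c : ℝ) (hc : 0 < c) (hπc : ∀ ω, c ≤ πa ω) :
    ∫ ω, (if A ω = a then (1 : ℝ) else 0) *
        (if Y (A ω) ω ≤ θ then (1 : ℝ) else 0) / πa ω ∂μ
      = (μ {ω | Y a ω ≤ θ}).toReal := by
  set S : Set Ω := Y a ⁻¹' Set.Iic θ with hS
  set T : Set Ω := A ⁻¹' {a} with hT
  have hYm : Measurable[mΩ] (Y a) := (hY a)
  have hAm : Measurable[mΩ] A := hA
  have hSmeas : MeasurableSet[mΩ] S := hYm measurableSet_Iic
  have hTmeas : MeasurableSet[mΩ] T := hAm (measurableSet_singleton a)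
  have hπpos : ∀ ω, πa ω ≠ 0 := fun ω => (lt_of_lt_of_le hc (hπc ω)).ne'
  -- the integrand equals πa⁻¹ * indicator (S ∩ T)
  set g : Ω → ℝ := (S ∩ T).indicator fun _ => (1 : ℝ) with hg
  have hptwise : ∀ ω, (if A ω = a then (1 : ℝ) else 0) *
      (if Y (A ω) ω ≤ θ then (1 : ℝ) else 0) / πa ω = (πa ω)⁻¹ * g ω := by
    intro ω
    by_cases h : A ω = a
    · by_cases h' : Y a ω ≤ θ
      · simp [hg, Set.indicator_apply, hS, hT, h, h', div_eq_inv_mul]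
      · simp [hg, Set.indicator_apply, hS, hT, h, h']
    · simp [hg, Set.indicator_apply, hS, hT, h]
  -- integrability
  have hgint : Integrable g μ := ipw_aux_integrable_indicator mΩ μ (hSmeas.inter hTmeas)
  have hinvmeas𝔪 : StronglyMeasurable[𝔪] fun ω => (πa ω)⁻¹ :=
    (hπmeas.inv).stronglyMeasurable
  have hinvmeas : AEStronglyMeasurable (fun ω => (πa ω)⁻¹) μ :=
    ((hπmeas.inv).mono h𝔪 le_rfl).aestronglyMeasurable
  have hbound : ∀ ω, ‖(πa ω)⁻¹‖ ≤ c⁻¹ := by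
    intro ω
    rw [Real.norm_eq_abs, abs_of_pos (inv_pos.mpr (lt_of_lt_of_le hc (hπc ω)))]
    exact inv_anti₀ hc (hπc ω)
  have hfint : Integrable ((fun ω => (πa ω)⁻¹) * g) μ :=
    hgint.bdd_mul (c := c⁻¹) ((hπmeas.inv).mono h𝔪 le_rfl).aestronglyMeasurable
      (Filter.Eventually.of_forall hbound)
  have hσ : SigmaFinite (μ.trim h𝔪) := by infer_instance
  -- rewrite the integral
  rw [integral_congr_ae (Filter.Eventually.of_forall hptwise)]
  have h1 : ∫ ω, (πa ω)⁻¹ * g ω ∂μ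
      = ∫ ω, (μ[(fun ω => (πa ω)⁻¹) * g | 𝔪]) ω ∂μ := by
    rw [integral_condExp h𝔪]
    rfl
  rw [h1]
  -- pull-out property
  have h2 : μ[(fun ω => (πa ω)⁻¹) * g | 𝔪]
      =ᵐ[μ] (fun ω => (πa ω)⁻¹) * μ[g | 𝔪] :=
    condExp_mul_of_stronglyMeasurable_left hinvmeas𝔪 hfint hgint
  -- conditional independence factorization
  have h3 : μ[g | 𝔪] =ᵐ[μ] fun ω => (μ⟦S | 𝔪⟧) ω * (μ⟦T | 𝔪⟧) ω := by
    exact (condIndepFun_iff_condExp_inter_preimage_eq_mul (hm' := h𝔪) (μ := μ)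
      hYm hAm).mp hCI (Set.Iic θ) {a} measurableSet_Iic (measurableSet_singleton a)
  -- πa is a version of μ⟦T|𝔪⟧
  have h4 : (μ⟦T | 𝔪⟧) =ᵐ[μ] πa := by
    have heq : (fun ω => if A ω = a then (1 : ℝ) else 0)
        = T.indicator fun _ => (1 : ℝ) := by
      funext ω
      by_cases h : A ω = a <;> simp [hT, Set.indicator_apply, h]
    rw [show (μ⟦T | 𝔪⟧) = μ[fun ω => if A ω = a then (1 : ℝ) else 0 | 𝔪] by rw [heq]]
    exact hπver.symm
  -- combine: μ[f|𝔪] =ᵐ μ⟦S|𝔪⟧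
  have h5 : μ[(fun ω => (πa ω)⁻¹) * g | 𝔪] =ᵐ[μ] μ⟦S | 𝔪⟧ := by
    filter_upwards [h2, h3, h4] with ω h2ω h3ω h4ω
    rw [h2ω]
    simp only [Pi.mul_apply]
    rw [h3ω, h4ω]
    field_simp [hπpos ω]
  have h6 : ∫ ω, (μ⟦S | 𝔪⟧) ω ∂μ = (μ S).toReal := by
    rw [integral_condExp h𝔪]
    exact ipw_aux_integral_indicator mΩ μ hSmeas
  rw [integral_congr_ae h5, h6]
  rfl
end

section
/- Let (Ω, ℱ, μ) be a probability space, 𝔪 ⊆ ℱ a sub-σ-algebra, m ≥ 1 a natural number, and 𝒜 := (Fin m → Bool) the set of cluster treatment assignments. Let A : Ω → 𝒜 be measurable, and let Y : 𝒜 → Ω → (Fin m → ℝ) be a family of measurable potential-outcome vectors, with observed outcomes Y^obs(ω) := Y(A(ω))(ω). Assume: (ignorability) for each a ∈ 𝒜 the random vector Y(a) and A are conditionally independent given 𝔪; (positivity) for each a ∈ 𝒜 there is an 𝔪-measurable version π_a of μ[1{A = a} | 𝔪] with π_a(ω) ≥ c for a constant c > 0 and all ω; (policy) H : 𝒜 →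 Ω → ℝ is such that each H(a) is 𝔪-measurable and bounded, H(a)(ω) ≥ 0, and Σ_{a∈𝒜} H(a)(ω) = 1 for all ω. Then for every θ ∈ ℝ and q ∈ ℝ, ∫ (1/m)·Σ_{j : Fin m} Σ_{a∈𝒜} 1{A(ω) = a}·H(a)(ω)·(1{Y^obs(ω)_j ≤ θ} − q)/π_a(ω) dμ(ω) = F_⋆(θ) − q, where F_⋆(θ) := ∫ (1/m)·Σ_{j} Σ_{a} H(a)(ω)·1{Y(a)(ω)_j ≤ θ} dμ(ω). In particular, the inverse-probability-weighted moment condition equals zero exactly when F_⋆(θ) = q. -/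
open MeasureTheory ProbabilityTheory Finset


lemma key_ipw_int {Ω : Type*} [mΩ : MeasurableSpace Ω] [StandardBorelSpace Ω]
    (μ : Measure Ω) [IsProbabilityMeasure μ]
    (𝔪 : MeasurableSpace Ω) (h𝔪 : 𝔪 ≤ mΩ)
    {β γ : Type*} [MeasurableSpace β] [MeasurableSpace γ]
    (X : Ω → β) (hX : Measurable[mΩ] X) (Z : Ω → γ) (hZ : Measurable[mΩ] Z)
    (hCI : CondIndepFun 𝔪 h𝔪 X Z μ)
    (S : Set β) (hS : MeasurableSet S) (T : Set γ) (hT : MeasurableSet T)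
    (π : Ω → ℝ) (hπmeas : Measurable[𝔪] π)
    (hπver : π =ᵐ[μ] μ⟦Z ⁻¹' T | 𝔪⟧)
    (c : ℝ) (hc : 0 < c) (hπc : ∀ ω, c ≤ π ω)
    (Hf : Ω → ℝ) (hHmeas : Measurable[𝔪] Hf) (CH : ℝ) (hHb : ∀ ω, |Hf ω| ≤ CH) :
    ∫ ω, (Hf ω / π ω) * Set.indicator (X ⁻¹' S ∩ Z ⁻¹' T) (fun _ => (1 : ℝ)) ω ∂μ
      = ∫ ω, Hf ω * Set.indicator (X ⁻¹' S) (fun _ => (1 : ℝ)) ω ∂μ := by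
  letI : MeasurableSpace Ω := mΩ
  have hπpos : ∀ ω, 0 < π ω := fun ω => lt_of_lt_of_le hc (hπc ω)
  have hΩ : Nonempty Ω := by
    by_contra h
    have h1 := measure_univ (μ := μ)
    rw [Set.univ_eq_empty_iff.mpr (not_nonempty_iff.mp h), measure_empty] at h1
    exact zero_ne_one h1
  have hCH0 : 0 ≤ CH := le_trans (abs_nonneg _) (hHb (Classical.arbitrary Ω))
  set g : Ω → ℝ := fun ω => Hf ω / π ω with hg_def
  have hg_m : Measurable[𝔪] g := hHmeas.div hπmeas
  have hg_sm : StronglyMeasurable[𝔪] g := hg_m.stronglyMeasurable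
  have hg_asm : AEStronglyMeasurable g μ :=
    ((hg_m.mono h𝔪 le_rfl)).aestronglyMeasurable
  have hg_bdd : ∀ ω, ‖g ω‖ ≤ CH / c := by
    intro ω
    rw [Real.norm_eq_abs, hg_def, abs_div, abs_of_pos (hπpos ω)]
    exact div_le_div₀ hCH0 (hHb ω) hc (hπc ω)
  have hHf_sm : StronglyMeasurable[𝔪] Hf := hHmeas.stronglyMeasurable
  have hHf_asm : AEStronglyMeasurable Hf μ :=
    ((hHmeas.mono h𝔪 le_rfl)).aestronglyMeasurable
  set f : Ω → ℝ := Set.indicator (X ⁻¹' S ∩ Z ⁻¹' T) (fun _ => (1 : ℝ)) with hf_def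
  set fS : Ω → ℝ := Set.indicator (X ⁻¹' S) (fun _ => (1 : ℝ)) with hfS_def
  have hmsST : MeasurableSet[mΩ] (X ⁻¹' S ∩ Z ⁻¹' T) := (hX hS).inter (hZ hT)
  have hmsS : MeasurableSet[mΩ] (X ⁻¹' S) := hX hS
  have hf_int : Integrable f μ := (integrable_const (1 : ℝ)).indicator hmsST
  have hfS_int : Integrable fS μ := (integrable_const (1 : ℝ)).indicator hmsS
  have hgf_int : Integrable (fun ω => g ω * f ω) μ :=
    hf_int.bdd_mul hg_asm (Filter.Eventually.of_forall hg_bdd)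
  have hHfS_int : Integrable (fun ω => Hf ω * fS ω) μ :=
    hfS_int.bdd_mul hHf_asm (Filter.Eventually.of_forall (fun ω => by rw [Real.norm_eq_abs]; exact hHb ω))
  -- pull-out for g * f
  have e1 : μ[fun ω => g ω * f ω | 𝔪] =ᵐ[μ] fun ω => g ω * (μ[f | 𝔪]) ω := by
    have := condExp_mul_of_stronglyMeasurable_left hg_sm (μ := μ) (g := f) hgf_int hf_int
    filter_upwards [this] with ω hω
    exact hω
  -- conditional independence factorization
  have e2 : (μ[f | 𝔪]) =ᵐ[μ]
      fun ω => (μ⟦X ⁻¹' S | 𝔪⟧) ω * (μ⟦Z ⁻¹' T | 𝔪⟧) ω := by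
    have := (condIndepFun_iff_condExp_inter_preimage_eq_mul (m' := 𝔪) (hm' := h𝔪) (μ := μ) hX hZ).mp hCI S T hS hT
    exact this
  -- pull-out for Hf * fS
  have e3 : (fun ω => Hf ω * (μ[fS | 𝔪]) ω) =ᵐ[μ] μ[fun ω => Hf ω * fS ω | 𝔪] := by
    have := condExp_mul_of_stronglyMeasurable_left hHf_sm (μ := μ) (g := fS) hHfS_int hfS_int
    filter_upwards [this] with ω hω
    exact hω.symm
  calc ∫ ω, g ω * f ω ∂μ
      = ∫ ω, (μ[fun ω => g ω * f ω | 𝔪]) ω ∂μ := (integral_condExp h𝔪).symm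
    _ = ∫ ω, Hf ω * (μ[fS | 𝔪]) ω ∂μ := by
        refine integral_congr_ae ?_
        filter_upwards [e1, e2, hπver] with ω h1 h2 h3
        rw [h1, h2, ← h3]
        have hne : π ω ≠ 0 := ne_of_gt (hπpos ω)
        rw [hg_def]
        field_simp
        ring
    _ = ∫ ω, (μ[fun ω => Hf ω * fS ω | 𝔪]) ω ∂μ := integral_congr_ae e3
    _ = ∫ ω, Hf ω * fS ω ∂μ := integral_condExp h𝔪

/-- Moment-condition identity of Theorem 1 for the overall policy estimand `Q_H^{(⋆)}`,
for a fixed cluster size `m`: under ignorability, positivity, and a policy `H` of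
`𝔪`-measurable nonnegative weights summing to one, for every `θ` and `q` the
inverse-probability-weighted moment equals `F_⋆(θ) − q`, where `F_⋆` is the CDF of the
policy-specific potential outcome of a uniformly random individual. In particular, the
moment condition is zero exactly when `F_⋆(θ) = q`. -/
theorem moment_condition_overall {Ω : Type*} (𝔪 : MeasurableSpace Ω) [mΩ : MeasurableSpace Ω]
    [StandardBorelSpace Ω] (μ : Measure Ω) [IsProbabilityMeasure μ]
    (h𝔪 : 𝔪 ≤ mΩ)
    (m : ℕ) (hm1 : 1 ≤ m)
    (A : Ω → (Fin m → Bool)) (hA : Measurable A)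
    (Y : (Fin m → Bool) → Ω → (Fin m → ℝ)) (hY : ∀ a, Measurable (Y a))
    (hCI : ∀ a : Fin m → Bool, CondIndepFun 𝔪 h𝔪 (Y a) A μ)
    (π : (Fin m → Bool) → Ω → ℝ) (hπmeas : ∀ a, Measurable[𝔪] (π a))
    (hπver : ∀ a : Fin m → Bool,
      π a =ᵐ[μ] μ[fun ω => if A ω = a then (1 : ℝ) else 0 | 𝔪])
    (c : ℝ) (hc : 0 < c) (hπc : ∀ a ω, c ≤ π a ω)
    (H : (Fin m → Bool) → Ω → ℝ) (hHmeas : ∀ a, Measurable[𝔪] (H a))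
    (CH : ℝ) (hHb : ∀ a ω, |H a ω| ≤ CH)
    (hHnn : ∀ a ω, 0 ≤ H a ω) (hHsum : ∀ ω, ∑ a : Fin m → Bool, H a ω = 1)
    (θ q : ℝ) :
    ∫ ω, (1 / (m : ℝ)) * ∑ j : Fin m, ∑ a : Fin m → Bool,
        (if A ω = a then (1 : ℝ) else 0) * H a ω *
          ((if Y (A ω) ω j ≤ θ then (1 : ℝ) else 0) - q) / π a ω ∂μ
      = (∫ ω, (1 / (m : ℝ)) * ∑ j : Fin m, ∑ a : Fin m → Bool,
          H a ω * (if Y a ω j ≤ θ then (1 : ℝ) else 0) ∂μ) - q := by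
  classical
  letI : MeasurableSpace Ω := mΩ
  have hΩ : Nonempty Ω := by
    by_contra h
    have h1 := measure_univ (μ := μ)
    rw [Set.univ_eq_empty_iff.mpr (not_nonempty_iff.mp h), measure_empty] at h1
    exact zero_ne_one h1
  have hπpos : ∀ a ω, 0 < π a ω := fun a ω => lt_of_lt_of_le hc (hπc a ω)
  have hCH0 : 0 ≤ CH :=
    le_trans (abs_nonneg _) (hHb (Classical.arbitrary _) (Classical.arbitrary Ω))
  have hm0 : (m : ℝ) ≠ 0 := by
    have : 0 < m := hm1
    exact_mod_cast this.ne'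
  have hA' : Measurable[mΩ] A := hA
  have hY' : ∀ a, Measurable[mΩ] (Y a) := fun a => hY a
  -- sets
  set Sj : Fin m → Set (Fin m → ℝ) := fun j => {v | v j ≤ θ} with hSj_def
  have hSj : ∀ j, MeasurableSet (Sj j) := fun j =>
    measurableSet_le (measurable_pi_apply j) measurable_const
  have hTa : ∀ a : Fin m → Bool, MeasurableSet ({a} : Set (Fin m → Bool)) := fun a =>
    measurableSet_singleton a
  -- version of positivity in indicator form
  have hπver' : ∀ a : Fin m → Bool, π a =ᵐ[μ] μ⟦A ⁻¹' {a} | 𝔪⟧ := by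
    intro a
    have hfe : (fun ω => if A ω = a then (1 : ℝ) else 0)
        = Set.indicator (A ⁻¹' {a}) (fun _ => (1 : ℝ)) := by
      funext ω
      simp [Set.indicator_apply]
    have := hπver a
    rwa [hfe] at this
  -- key identities from the auxiliary lemma
  have key1 : ∀ (a : Fin m → Bool) (j : Fin m),
      ∫ ω, (H a ω / π a ω) *
          Set.indicator ((Y a) ⁻¹' (Sj j) ∩ A ⁻¹' {a}) (fun _ => (1 : ℝ)) ω ∂μ
        = ∫ ω, H a ω * Set.indicator ((Y a) ⁻¹' (Sj j)) (fun _ => (1 : ℝ)) ω ∂μ :=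
    fun a j => key_ipw_int μ 𝔪 h𝔪 (Y a) (hY' a) A hA' (hCI a) (Sj j) (hSj j) {a} (hTa a)
      (π a) (hπmeas a) (hπver' a) c hc (hπc a) (H a) (hHmeas a) CH (hHb a)
  have key2 : ∀ a : Fin m → Bool,
      ∫ ω, (H a ω / π a ω) * Set.indicator (A ⁻¹' {a}) (fun _ => (1 : ℝ)) ω ∂μ
        = ∫ ω, H a ω ∂μ := by
    intro a
    have h := key_ipw_int μ 𝔪 h𝔪 (Y a) (hY' a) A hA' (hCI a) Set.univ MeasurableSet.univ
      {a} (hTa a) (π a) (hπmeas a) (hπver' a) c hc (hπc a) (H a) (hHmeas a) CH (hHb a)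
    simpa [Set.preimage_univ, Set.univ_inter, Set.indicator_univ] using h
  -- integrability facts
  have gasm : ∀ a, AEStronglyMeasurable (fun ω => H a ω / π a ω) μ := fun a =>
    (((hHmeas a).div (hπmeas a)).mono h𝔪 le_rfl).aestronglyMeasurable
  have gbd : ∀ a ω, ‖H a ω / π a ω‖ ≤ CH / c := by
    intro a ω
    rw [Real.norm_eq_abs, abs_div, abs_of_pos (hπpos a ω)]
    exact div_le_div₀ hCH0 (hHb a ω) hc (hπc a ω)
  have Hasm : ∀ a, AEStronglyMeasurable (H a) μ := fun a =>
    ((hHmeas a).mono h𝔪 le_rfl).aestronglyMeasurable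
  have indST_int : ∀ a j, Integrable
      (Set.indicator ((Y a) ⁻¹' (Sj j) ∩ A ⁻¹' {a}) (fun _ => (1 : ℝ))) μ := fun a j =>
    (integrable_const (1 : ℝ)).indicator ((hY' a (hSj j)).inter (hA' (hTa a)))
  have indT_int : ∀ a, Integrable
      (Set.indicator (A ⁻¹' {a}) (fun _ => (1 : ℝ))) μ := fun a =>
    (integrable_const (1 : ℝ)).indicator (hA' (hTa a))
  have indS_int : ∀ a j, Integrable
      (Set.indicator ((Y a) ⁻¹' (Sj j)) (fun _ => (1 : ℝ))) μ := fun a j =>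
    (integrable_const (1 : ℝ)).indicator (hY' a (hSj j))
  have intLterm : ∀ a j, Integrable (fun ω => (H a ω / π a ω) *
      (Set.indicator ((Y a) ⁻¹' (Sj j) ∩ A ⁻¹' {a}) (fun _ => (1 : ℝ)) ω
        - q * Set.indicator (A ⁻¹' {a}) (fun _ => (1 : ℝ)) ω)) μ := fun a j =>
    ((indST_int a j).sub ((indT_int a).const_mul q)).bdd_mul (gasm a) (Filter.Eventually.of_forall (gbd a))
  have intA : ∀ a j, Integrable (fun ω => (H a ω / π a ω) *
      Set.indicator ((Y a) ⁻¹' (Sj j) ∩ A ⁻¹' {a}) (fun _ => (1 : ℝ)) ω) μ := fun a j =>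
    (indST_int a j).bdd_mul (gasm a) (Filter.Eventually.of_forall (gbd a))
  have intB : ∀ a, Integrable (fun ω => (H a ω / π a ω) *
      Set.indicator (A ⁻¹' {a}) (fun _ => (1 : ℝ)) ω) μ := fun a =>
    (indT_int a).bdd_mul (gasm a) (Filter.Eventually.of_forall (gbd a))
  have intH : ∀ a, Integrable (H a) μ := by
    intro a
    have := (integrable_const (1 : ℝ)).bdd_mul (Hasm a)
      (Filter.Eventually.of_forall (fun ω => by rw [Real.norm_eq_abs]; exact hHb a ω))
    simpa using this
  have intHS : ∀ a j, Integrable (fun ω => H a ω *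
      Set.indicator ((Y a) ⁻¹' (Sj j)) (fun _ => (1 : ℝ)) ω) μ := fun a j =>
    (indS_int a j).bdd_mul (Hasm a) (Filter.Eventually.of_forall (fun ω => by rw [Real.norm_eq_abs]; exact hHb a ω))
  -- sum of weights integrates to 1
  have hsum1 : ∑ a : Fin m → Bool, ∫ ω, H a ω ∂μ = 1 := by
    rw [← integral_finset_sum _ (fun a _ => intH a)]
    simp [hHsum]
  -- per-term identity for the LHS
  have term_eq : ∀ (a : Fin m → Bool) (j : Fin m),
      ∫ ω, (H a ω / π a ω) *
          (Set.indicator ((Y a) ⁻¹' (Sj j) ∩ A ⁻¹' {a}) (fun _ => (1 : ℝ)) ω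
            - q * Set.indicator (A ⁻¹' {a}) (fun _ => (1 : ℝ)) ω) ∂μ
        = (∫ ω, H a ω * Set.indicator ((Y a) ⁻¹' (Sj j)) (fun _ => (1 : ℝ)) ω ∂μ)
            - q * ∫ ω, H a ω ∂μ := by
    intro a j
    have hsplit : ∀ ω, (H a ω / π a ω) *
        (Set.indicator ((Y a) ⁻¹' (Sj j) ∩ A ⁻¹' {a}) (fun _ => (1 : ℝ)) ω
          - q * Set.indicator (A ⁻¹' {a}) (fun _ => (1 : ℝ)) ω)
        = (H a ω / π a ω) *
            Set.indicator ((Y a) ⁻¹' (Sj j) ∩ A ⁻¹' {a}) (fun _ => (1 : ℝ)) ω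
          - q * ((H a ω / π a ω) *
            Set.indicator (A ⁻¹' {a}) (fun _ => (1 : ℝ)) ω) := fun ω => by ring
    calc ∫ ω, (H a ω / π a ω) *
          (Set.indicator ((Y a) ⁻¹' (Sj j) ∩ A ⁻¹' {a}) (fun _ => (1 : ℝ)) ω
            - q * Set.indicator (A ⁻¹' {a}) (fun _ => (1 : ℝ)) ω) ∂μ
        = ∫ ω, ((H a ω / π a ω) *
            Set.indicator ((Y a) ⁻¹' (Sj j) ∩ A ⁻¹' {a}) (fun _ => (1 : ℝ)) ω
          - q * ((H a ω / π a ω) *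
            Set.indicator (A ⁻¹' {a}) (fun _ => (1 : ℝ)) ω)) ∂μ := by
          exact integral_congr_ae (Filter.Eventually.of_forall hsplit)
      _ = (∫ ω, (H a ω / π a ω) *
            Set.indicator ((Y a) ⁻¹' (Sj j) ∩ A ⁻¹' {a}) (fun _ => (1 : ℝ)) ω ∂μ)
          - ∫ ω, q * ((H a ω / π a ω) *
            Set.indicator (A ⁻¹' {a}) (fun _ => (1 : ℝ)) ω) ∂μ :=
          integral_sub (intA a j) ((intB a).const_mul q)
      _ = (∫ ω, H a ω * Set.indicator ((Y a) ⁻¹' (Sj j)) (fun _ => (1 : ℝ)) ω ∂μ)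
          - q * ∫ ω, H a ω ∂μ := by
          rw [key1 a j, integral_const_mul, key2 a]
  -- rewrite the LHS integrand pointwise
  have LHSpt : ∀ ω, (1 / (m : ℝ)) * ∑ j : Fin m, ∑ a : Fin m → Bool,
        (if A ω = a then (1 : ℝ) else 0) * H a ω *
          ((if Y (A ω) ω j ≤ θ then (1 : ℝ) else 0) - q) / π a ω
      = (1 / (m : ℝ)) * ∑ j : Fin m, ∑ a : Fin m → Bool,
        (H a ω / π a ω) *
          (Set.indicator ((Y a) ⁻¹' (Sj j) ∩ A ⁻¹' {a}) (fun _ => (1 : ℝ)) ω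
            - q * Set.indicator (A ⁻¹' {a}) (fun _ => (1 : ℝ)) ω) := by
    intro ω
    congr 1
    refine Finset.sum_congr rfl fun j _ => Finset.sum_congr rfl fun a _ => ?_
    by_cases h : A ω = a
    · simp only [h, if_true, Set.indicator_apply, Set.mem_inter_iff, Set.mem_preimage,
        Set.mem_singleton_iff, Set.mem_setOf_eq, hSj_def, and_true, if_pos rfl]
      by_cases hy : Y a ω j ≤ θ
      · simp only [hy, if_true]
        ring
      · simp only [hy, if_false]
        ring
    · simp [h, Set.indicator_apply, Set.mem_inter_iff, Set.mem_preimage,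
        Set.mem_singleton_iff]
  -- rewrite the RHS integrand pointwise
  have RHSpt : ∀ ω, (1 / (m : ℝ)) * ∑ j : Fin m, ∑ a : Fin m → Bool,
        H a ω * (if Y a ω j ≤ θ then (1 : ℝ) else 0)
      = (1 / (m : ℝ)) * ∑ j : Fin m, ∑ a : Fin m → Bool,
        H a ω * Set.indicator ((Y a) ⁻¹' (Sj j)) (fun _ => (1 : ℝ)) ω := by
    intro ω
    refine congrArg (fun z => 1 / (m : ℝ) * z) ?_
    refine Finset.sum_congr rfl fun j _ => Finset.sum_congr rfl fun a _ => ?_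
    simp [Set.indicator_apply, hSj_def]
  -- compute both sides
  have LHSval : ∫ ω, (1 / (m : ℝ)) * ∑ j : Fin m, ∑ a : Fin m → Bool,
        (if A ω = a then (1 : ℝ) else 0) * H a ω *
          ((if Y (A ω) ω j ≤ θ then (1 : ℝ) else 0) - q) / π a ω ∂μ
      = (1 / (m : ℝ)) * ∑ j : Fin m, ∑ a : Fin m → Bool,
          ((∫ ω, H a ω * Set.indicator ((Y a) ⁻¹' (Sj j)) (fun _ => (1 : ℝ)) ω ∂μ)
            - q * ∫ ω, H a ω ∂μ) := by
    rw [integral_congr_ae (Filter.Eventually.of_forall LHSpt), integral_const_mul,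
      integral_finset_sum _ (fun j _ => integrable_finset_sum _ (fun a _ => intLterm a j))]
    congr 1
    refine Finset.sum_congr rfl fun j _ => ?_
    rw [integral_finset_sum _ (fun a _ => intLterm a j)]
    exact Finset.sum_congr rfl fun a _ => term_eq a j
  have RHSval : ∫ ω, (1 / (m : ℝ)) * ∑ j : Fin m, ∑ a : Fin m → Bool,
        H a ω * (if Y a ω j ≤ θ then (1 : ℝ) else 0) ∂μ
      = (1 / (m : ℝ)) * ∑ j : Fin m, ∑ a : Fin m → Bool,
          ∫ ω, H a ω * Set.indicator ((Y a) ⁻¹' (Sj j)) (fun _ => (1 : ℝ)) ω ∂μ := by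
    rw [integral_congr_ae (Filter.Eventually.of_forall RHSpt), integral_const_mul,
      integral_finset_sum _ (fun j _ => integrable_finset_sum _ (fun a _ => intHS a j))]
    congr 1
    exact Finset.sum_congr rfl fun j _ => integral_finset_sum _ (fun a _ => intHS a j)
  rw [LHSval, RHSval]
  have hsum_expand : ∑ j : Fin m, ∑ a : Fin m → Bool,
      ((∫ ω, H a ω * Set.indicator ((Y a) ⁻¹' (Sj j)) (fun _ => (1 : ℝ)) ω ∂μ)
        - q * ∫ ω, H a ω ∂μ)
      = (∑ j : Fin m, ∑ a : Fin m → Bool,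
          ∫ ω, H a ω * Set.indicator ((Y a) ⁻¹' (Sj j)) (fun _ => (1 : ℝ)) ω ∂μ)
        - (m : ℝ) * q := by
    rw [Finset.sum_congr rfl fun j _ => Finset.sum_sub_distrib _ _, Finset.sum_sub_distrib]
    congr 1
    rw [Finset.sum_congr rfl (fun j _ => by rw [← Finset.mul_sum, hsum1, mul_one] :
      ∀ j ∈ Finset.univ, _ = q)]
    simp [Finset.sum_const, mul_comm]
  rw [hsum_expand, mul_sub]
  congr 1
  field_simp
end

section
/- Let (Ω, ℱ, μ) be a probability space, 𝔪 ⊆ ℱ a sub-σ-algebra, m ≥ 1 a natural number, and 𝒜 := (Fin m → Bool). Let A : Ω → 𝒜 be measurable, Y : 𝒜 → Ω → (Fin m → ℝ) a family of measurable potential-outcome vectors, and Y^obs(ω) := Y(A(ω))(ω). Assume ignorability (for each a ∈ 𝒜, Y(a) and A are conditionally independent given 𝔪), positivity (for each a ∈ 𝒜 there is an 𝔪-measurable version π_a of μ[1{A = a} | 𝔪] with π_a ≥ c > 0 everywhere), and a policy H : 𝒜 → Ω → ℝ with each H(a) 𝔪-measurable, bounded, nonnegative, and Σ_{a∈𝒜}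 H(a)(ω) = 1 for all ω. Fix t ∈ Bool and, for j : Fin m and a ∈ 𝒜, define the weight w_j^{(t)}(a, ω) := 1{a_j = t}·( H(update a j true)(ω) + H(update a j false)(ω) ), where update a j b replaces the j-th coordinate of a by b. Then for every θ ∈ ℝ and q ∈ ℝ, ∫ (1/m)·Σ_{j} Σ_{a} 1{A(ω) = a}·w_j^{(t)}(a, ω)·(1{Y^obs(ω)_j ≤ θ} − q)/π_a(ω) dμ(ω) = F_t(θ) − q, where F_t(θ) := ∫ (1/m)·Σ_{j} Σ_{a : a_j = t} ( H(update a j true)(ω) + H(update a j false)(ω) )·1{Y(a)(ω)_j ≤ θ} dμ(ω). -/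
open MeasureTheory ProbabilityTheory Finset

private lemma integrable_of_bdd {Ω : Type*} {mΩ : MeasurableSpace Ω} {μ : Measure Ω}
    [IsFiniteMeasure μ] {f : Ω → ℝ} (hf : Measurable f) {C : ℝ} (h : ∀ ω, |f ω| ≤ C) :
    Integrable f μ :=
  (integrable_const C).mono' hf.aestronglyMeasurable
    (Filter.Eventually.of_forall fun ω => (Real.norm_eq_abs _).le.trans (h ω))

private lemma pullout_aux {Ω : Type*} {mΩ : MeasurableSpace Ω} (μ : Measure Ω)
    [IsProbabilityMeasure μ] (𝔪 : MeasurableSpace Ω) (h𝔪 : 𝔪 ≤ mΩ)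
    {h Z : Ω → ℝ} (hh : StronglyMeasurable[𝔪] h)
    (hZ : Integrable Z μ) (hhZ : Integrable (fun ω => h ω * Z ω) μ) :
    ∫ ω, h ω * Z ω ∂μ = ∫ ω, h ω * (μ[Z|𝔪]) ω ∂μ := by
  haveI : SigmaFinite (μ.trim h𝔪) := by infer_instance
  have h1 : μ[fun ω => h ω * Z ω|𝔪] =ᵐ[μ] fun ω => h ω * (μ[Z|𝔪]) ω := by
    have := condExp_mul_of_stronglyMeasurable_left hh (show Integrable (h * Z) μ from hhZ) hZ
    filter_upwards [this] with ω hω using hω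
  calc ∫ ω, h ω * Z ω ∂μ = ∫ ω, (μ[fun ω => h ω * Z ω|𝔪]) ω ∂μ := (integral_condExp h𝔪).symm
    _ = _ := integral_congr_ae h1

private lemma key_aux {Ω : Type*} {mΩ : MeasurableSpace Ω}
    (μ : Measure Ω) [IsProbabilityMeasure μ] (hsb : @StandardBorelSpace Ω mΩ)
    (𝔪 : MeasurableSpace Ω) (h𝔪 : 𝔪 ≤ mΩ)
    {α β : Type*} [MeasurableSpace α] [MeasurableSpace β]
    {Ya : Ω → α} {A : Ω → β} (hYa : Measurable[mΩ] Ya) (hA : Measurable[mΩ] A)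
    (hCI : CondIndepFun 𝔪 h𝔪 Ya A μ)
    {S : Set α} (hS : MeasurableSet S) {T : Set β} (hT : MeasurableSet T)
    {π : Ω → ℝ} (hπmeas : Measurable[𝔪] π)
    (hπver : π =ᵐ[μ] μ[fun ω => T.indicator 1 (A ω)|𝔪])
    {c : ℝ} (hc : 0 < c) (hπc : ∀ ω, c ≤ π ω)
    {w : Ω → ℝ} (hw : Measurable[𝔪] w) {Cw : ℝ} (hwb : ∀ ω, |w ω| ≤ Cw) :
    ∫ ω, (w ω / π ω) * (S.indicator 1 (Ya ω) * T.indicator 1 (A ω)) ∂μ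
      = ∫ ω, w ω * S.indicator 1 (Ya ω) ∂μ := by
  haveI := hsb
  haveI : SigmaFinite (μ.trim h𝔪) := by infer_instance
  set f : Ω → ℝ := fun ω => S.indicator 1 (Ya ω) with hf
  set g : Ω → ℝ := fun ω => T.indicator 1 (A ω) with hg
  have hπ0 : ∀ ω, π ω ≠ 0 := fun ω => (hc.trans_le (hπc ω)).ne'
  have hπpos : ∀ ω, 0 < π ω := fun ω => hc.trans_le (hπc ω)
  have hfmeas : Measurable[mΩ] f := (measurable_one.indicator hS).comp hYa
  have hgmeas : Measurable[mΩ] g := (measurable_one.indicator hT).comp hA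
  have hfb : ∀ ω, |f ω| ≤ 1 := by
    intro ω; by_cases h : Ya ω ∈ S <;> simp [hf, Set.indicator_apply, h]
  have hgb : ∀ ω, |g ω| ≤ 1 := by
    intro ω; by_cases h : A ω ∈ T <;> simp [hg, Set.indicator_apply, h]
  have hwmeas : Measurable[mΩ] w := hw.mono h𝔪 le_rfl
  have hπmeas' : Measurable[mΩ] π := hπmeas.mono h𝔪 le_rfl
  have hhmeas : Measurable[mΩ] (fun ω => w ω / π ω) := hwmeas.div hπmeas'
  have hhb : ∀ ω, |w ω / π ω| ≤ Cw / c := by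
    intro ω
    have h0 : 0 ≤ Cw := le_trans (abs_nonneg _) (hwb ω)
    rw [abs_div, abs_of_pos (hπpos ω)]
    exact div_le_div₀ h0 (hwb ω) hc (hπc ω)
  have hZint : Integrable (fun ω => f ω * g ω) μ :=
    integrable_of_bdd (hfmeas.mul hgmeas) (C := 1) (fun ω => by
      rw [abs_mul]
      calc |f ω| * |g ω| ≤ 1 * 1 := mul_le_mul (hfb ω) (hgb ω) (abs_nonneg _) zero_le_one
        _ = 1 := one_mul 1)
  have hfint : Integrable f μ := integrable_of_bdd hfmeas hfb
  have hhZint : Integrable (fun ω => (w ω / π ω) * (f ω * g ω)) μ :=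
    integrable_of_bdd (hhmeas.mul (hfmeas.mul hgmeas)) (C := (Cw / c) * 1) (fun ω => by
      rw [abs_mul]
      refine mul_le_mul (hhb ω) ?_ (abs_nonneg _) ?_
      · rw [abs_mul]
        calc |f ω| * |g ω| ≤ 1 * 1 := mul_le_mul (hfb ω) (hgb ω) (abs_nonneg _) zero_le_one
          _ = 1 := one_mul 1
      · exact div_nonneg (le_trans (abs_nonneg _) (hwb ω)) hc.le)
  have hwfint : Integrable (fun ω => w ω * f ω) μ :=
    integrable_of_bdd (hwmeas.mul hfmeas) (C := Cw * 1) (fun ω => by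
      rw [abs_mul]
      exact mul_le_mul (hwb ω) (hfb ω) (abs_nonneg _) (le_trans (abs_nonneg _) (hwb ω)))
  -- conditional independence step
  have e1 : (Ya ⁻¹' S ∩ A ⁻¹' T).indicator (fun _ => (1 : ℝ)) = fun ω => f ω * g ω := by
    funext ω
    simp only [hf, hg, Set.indicator_apply, Set.mem_inter_iff, Set.mem_preimage]
    by_cases h1 : Ya ω ∈ S <;> by_cases h2 : A ω ∈ T <;> simp [h1, h2]
  have e2 : (Ya ⁻¹' S).indicator (fun _ => (1 : ℝ)) = f := by
    funext ω
    simp only [hf, Set.indicator_apply, Set.mem_preimage]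
    by_cases h1 : Ya ω ∈ S <;> simp [h1]
  have e3 : (A ⁻¹' T).indicator (fun _ => (1 : ℝ)) = g := by
    funext ω
    simp only [hg, Set.indicator_apply, Set.mem_preimage]
    by_cases h2 : A ω ∈ T <;> simp [h2]
  have hCImul : μ[fun ω => f ω * g ω|𝔪] =ᵐ[μ] fun ω => (μ[f|𝔪]) ω * (μ[g|𝔪]) ω := by
    have h2 := (condIndepFun_iff_condExp_inter_preimage_eq_mul (mΩ := mΩ) hYa hA).mp hCI S T hS hT
    rw [e1, e2, e3] at h2
    exact h2
  calc
    ∫ ω, (w ω / π ω) * (S.indicator 1 (Ya ω) * T.indicator 1 (A ω)) ∂μ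
        = ∫ ω, (w ω / π ω) * (μ[fun ω => f ω * g ω|𝔪]) ω ∂μ :=
      pullout_aux μ 𝔪 h𝔪 (hw.div hπmeas).stronglyMeasurable hZint hhZint
    _ = ∫ ω, (w ω / π ω) * ((μ[f|𝔪]) ω * (μ[g|𝔪]) ω) ∂μ := by
      refine integral_congr_ae ?_
      filter_upwards [hCImul] with ω hω
      rw [hω]
    _ = ∫ ω, (w ω / π ω) * ((μ[f|𝔪]) ω * π ω) ∂μ := by
      refine integral_congr_ae ?_
      have hπver' : π =ᵐ[μ] μ[g|𝔪] := hπver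
      filter_upwards [hπver'] with ω hω
      rw [hω]
    _ = ∫ ω, w ω * (μ[f|𝔪]) ω ∂μ := by
      refine integral_congr_ae (Filter.Eventually.of_forall fun ω => ?_)
      show w ω / π ω * ((μ[f|𝔪]) ω * π ω) = w ω * (μ[f|𝔪]) ω
      rw [div_mul_eq_mul_div, mul_comm (w ω) ((μ[f|𝔪]) ω * π ω), mul_assoc,
        mul_comm (π ω) (w ω), ← mul_assoc, mul_div_assoc, div_self (hπ0 ω), mul_one,
        mul_comm ((μ[f|𝔪]) ω) (w ω)]
    _ = ∫ ω, w ω * f ω ∂μ :=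
      (pullout_aux μ 𝔪 h𝔪 hw.stronglyMeasurable hfint hwfint).symm

private lemma wsum_aux {m : ℕ} (G : (Fin m → Bool) → ℝ) (j : Fin m) (t : Bool) :
    ∑ a ∈ Finset.univ.filter (fun a : Fin m → Bool => a j = t),
      (G (Function.update a j true) + G (Function.update a j false))
      = ∑ b : Fin m → Bool, G b := by
  classical
  rw [Finset.sum_add_distrib]
  have key : ∀ s : Bool,
      ∑ a ∈ Finset.univ.filter (fun a : Fin m → Bool => a j = t), G (Function.update a j s)
        = ∑ b ∈ Finset.univ.filter (fun b : Fin m → Bool => b j = s), G b := by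
    intro s
    refine Finset.sum_nbij' (fun a => Function.update a j s)
      (fun b => Function.update b j t) ?_ ?_ ?_ ?_ ?_
    · intro a ha; simp [Function.update_self]
    · intro b hb; simp [Function.update_self]
    · intro a ha
      simp only [Finset.mem_filter] at ha
      show Function.update (Function.update a j s) j t = a
      rw [Function.update_idem, ← ha.2, Function.update_eq_self]
    · intro b hb
      simp only [Finset.mem_filter] at hb
      show Function.update (Function.update b j t) j s = b
      rw [Function.update_idem, ← hb.2, Function.update_eq_self]
    · intro a ha; rfl
  rw [key true, key false]
  have h2 := Finset.sum_filter_add_sum_filter_not Finset.univ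
    (fun b : Fin m → Bool => b j = true) G
  have h3 : Finset.univ.filter (fun b : Fin m → Bool => ¬ b j = true)
      = Finset.univ.filter (fun b : Fin m → Bool => b j = false) := by
    apply Finset.filter_congr; intro b _; simp [Bool.not_eq_true]
  rw [h3] at h2
  exact h2


/-- Moment-condition identity of Theorem 1 for the estimands `Q_H^{(0)}` and `Q_H^{(1)}`,
for a fixed cluster size `m`: under ignorability, positivity, and a policy `H` of
`𝔪`-measurable, bounded, nonnegative weights summing to one, with the weight
`w_j^{(t)}(a, ω) = 1{a_j = t} (H(update a j true)(ω) + H(update a j false)(ω))`, the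
inverse-probability-weighted moment equals `F_t(θ) − q`, where `F_t` is the CDF of the
potential outcome of a uniformly random individual whose own treatment is fixed to `t`
while peers follow the policy `H`. -/
theorem moment_condition_individual {Ω : Type*} (𝔪 : MeasurableSpace Ω) [mΩ : MeasurableSpace Ω]
    [StandardBorelSpace Ω] (μ : Measure Ω) [IsProbabilityMeasure μ]
    (h𝔪 : 𝔪 ≤ mΩ)
    (m : ℕ) (hm1 : 1 ≤ m)
    (A : Ω → (Fin m → Bool)) (hA : Measurable A)
    (Y : (Fin m → Bool) → Ω → (Fin m → ℝ)) (hY : ∀ a, Measurable (Y a))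
    (hCI : ∀ a : Fin m → Bool, CondIndepFun 𝔪 h𝔪 (Y a) A μ)
    (π : (Fin m → Bool) → Ω → ℝ) (hπmeas : ∀ a, Measurable[𝔪] (π a))
    (hπver : ∀ a : Fin m → Bool,
      π a =ᵐ[μ] μ[fun ω => if A ω = a then (1 : ℝ) else 0 | 𝔪])
    (c : ℝ) (hc : 0 < c) (hπc : ∀ a ω, c ≤ π a ω)
    (H : (Fin m → Bool) → Ω → ℝ) (hHmeas : ∀ a, Measurable[𝔪] (H a))
    (CH : ℝ) (hHb : ∀ a ω, |H a ω| ≤ CH)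
    (hHnn : ∀ a ω, 0 ≤ H a ω) (hHsum : ∀ ω, ∑ a : Fin m → Bool, H a ω = 1)
    (t : Bool) (θ q : ℝ) :
    ∫ ω, (1 / (m : ℝ)) * ∑ j : Fin m, ∑ a : Fin m → Bool,
        (if A ω = a then (1 : ℝ) else 0) *
          ((if a j = t then (1 : ℝ) else 0) *
            (H (Function.update a j true) ω + H (Function.update a j false) ω)) *
          ((if Y (A ω) ω j ≤ θ then (1 : ℝ) else 0) - q) / π a ω ∂μ
      = (∫ ω, (1 / (m : ℝ)) * ∑ j : Fin m,
            ∑ a ∈ univ.filter (fun a : Fin m → Bool => a j = t),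
            (H (Function.update a j true) ω + H (Function.update a j false) ω) *
              (if Y a ω j ≤ θ then (1 : ℝ) else 0) ∂μ) - q := by
  classical
  have hsb : @StandardBorelSpace Ω mΩ := by infer_instance
  have hA' : Measurable[mΩ] A := hA
  have hY' : ∀ a, Measurable[mΩ] (Y a) := fun a => (hY a)
  have hπmeas' : ∀ a, Measurable[mΩ] (π a) := fun a => (hπmeas a).mono h𝔪 le_rfl
  have hmR : (0 : ℝ) < m := by exact_mod_cast Nat.lt_of_lt_of_le Nat.zero_lt_one hm1
  set w : Fin m → (Fin m → Bool) → Ω → ℝ := fun j a ω =>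
    H (Function.update a j true) ω + H (Function.update a j false) ω with hw_def
  have hwmeas𝔪 : ∀ j a, Measurable[𝔪] (w j a) := fun j a => (hHmeas _).add (hHmeas _)
  have hwmeas : ∀ j a, Measurable[mΩ] (w j a) := fun j a => (hwmeas𝔪 j a).mono h𝔪 le_rfl
  have hwb : ∀ j a ω, |w j a ω| ≤ CH + CH := fun j a ω =>
    (abs_add_le _ _).trans (add_le_add (hHb _ _) (hHb _ _))
  set S : Fin m → Set (Fin m → ℝ) := fun j => {x | x j ≤ θ} with hS_def
  have hS : ∀ j, MeasurableSet (S j) := fun j =>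
    measurableSet_le (measurable_pi_apply j) measurable_const
  have hπpos : ∀ a ω, 0 < π a ω := fun a ω => hc.trans_le (hπc a ω)
  have hπ0 : ∀ a ω, π a ω ≠ 0 := fun a ω => (hπpos a ω).ne'
  -- indicator ↔ if conversions
  have ind_f : ∀ j a ω, (S j).indicator (1 : (Fin m → ℝ) → ℝ) (Y a ω)
      = if Y a ω j ≤ θ then (1:ℝ) else 0 := by
    intro j a ω
    by_cases h : Y a ω j ≤ θ <;>
      simp [hS_def, Set.indicator_apply, Set.mem_setOf_eq, h]
  have ind_g : ∀ (a : Fin m → Bool) ω,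
      ({a} : Set (Fin m → Bool)).indicator (1 : (Fin m → Bool) → ℝ) (A ω)
      = if A ω = a then (1:ℝ) else 0 := by
    intro a ω
    by_cases h : A ω = a <;> simp [Set.indicator_apply, h]
  -- key identities from conditional independence
  have hπver' : ∀ a : Fin m → Bool, π a =ᵐ[μ]
      μ[fun ω => ({a} : Set (Fin m → Bool)).indicator (1 : (Fin m → Bool) → ℝ) (A ω) | 𝔪] := by
    intro a
    have : (fun ω => ({a} : Set (Fin m → Bool)).indicator (1 : (Fin m → Bool) → ℝ) (A ω))
        = fun ω => if A ω = a then (1:ℝ) else 0 := funext fun ω => ind_g a ω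
    rw [this]
    exact hπver a
  have key1 : ∀ j a, ∫ ω, (w j a ω / π a ω) *
        ((S j).indicator 1 (Y a ω) * ({a} : Set (Fin m → Bool)).indicator 1 (A ω)) ∂μ
      = ∫ ω, w j a ω * (S j).indicator 1 (Y a ω) ∂μ := fun j a =>
    key_aux μ hsb 𝔪 h𝔪 (hY' a) hA' (hCI a) (hS j) (measurableSet_singleton a)
      (hπmeas a) (hπver' a) hc (hπc a) (hwmeas𝔪 j a) (hwb j a)
  have key2 : ∀ j a, ∫ ω, (w j a ω / π a ω) *
        ((Set.univ : Set (Fin m → ℝ)).indicator 1 (Y a ω)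
          * ({a} : Set (Fin m → Bool)).indicator 1 (A ω)) ∂μ
      = ∫ ω, w j a ω * (Set.univ : Set (Fin m → ℝ)).indicator 1 (Y a ω) ∂μ := fun j a =>
    key_aux μ hsb 𝔪 h𝔪 (hY' a) hA' (hCI a) MeasurableSet.univ (measurableSet_singleton a)
      (hπmeas a) (hπver' a) hc (hπc a) (hwmeas𝔪 j a) (hwb j a)
  simp only [Set.indicator_univ, Pi.one_apply, one_mul, mul_one] at key2
  -- measurability of indicator composites
  have hfmeas : ∀ j a, Measurable[mΩ]
      (fun ω => (S j).indicator (1 : (Fin m → ℝ) → ℝ) (Y a ω)) := fun j a =>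
    (measurable_one.indicator (hS j)).comp (hY' a)
  have hgmeas : ∀ a : Fin m → Bool, Measurable[mΩ]
      (fun ω => ({a} : Set (Fin m → Bool)).indicator (1 : (Fin m → Bool) → ℝ) (A ω)) := fun a =>
    (measurable_one.indicator (measurableSet_singleton a)).comp hA'
  have hfb : ∀ j a ω, |(S j).indicator (1 : (Fin m → ℝ) → ℝ) (Y a ω)| ≤ 1 := by
    intro j a ω
    by_cases h : Y a ω ∈ S j <;> simp [Set.indicator_apply, h]
  have hgb : ∀ (a : Fin m → Bool) ω,
      |({a} : Set (Fin m → Bool)).indicator (1 : (Fin m → Bool) → ℝ) (A ω)| ≤ 1 := by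
    intro a ω
    by_cases h : A ω ∈ ({a} : Set (Fin m → Bool)) <;> simp [Set.indicator_apply, h]
  have hdivb : ∀ j a ω, |w j a ω / π a ω| ≤ (CH + CH) / c := by
    intro j a ω
    rw [abs_div, abs_of_pos (hπpos a ω)]
    exact div_le_div₀ (le_trans (abs_nonneg _) (hwb j a ω)) (hwb j a ω) hc (hπc a ω)
  have hCHc : ∀ (j : Fin m) (a : Fin m → Bool) (ω : Ω), 0 ≤ (CH + CH) / c := fun j a ω =>
    div_nonneg (le_trans (abs_nonneg _) (hwb j a ω)) hc.le
  have hintA : ∀ j a, Integrable (fun ω => (w j a ω / π a ω) *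
      ((S j).indicator 1 (Y a ω) * ({a} : Set (Fin m → Bool)).indicator 1 (A ω))) μ := by
    intro j a
    refine integrable_of_bdd (((hwmeas j a).div (hπmeas' a)).mul
      ((hfmeas j a).mul (hgmeas a))) (C := ((CH + CH) / c) * (1 * 1)) (fun ω => ?_)
    rw [abs_mul, abs_mul]
    exact mul_le_mul (hdivb j a ω)
      (mul_le_mul (hfb j a ω) (hgb a ω) (abs_nonneg _) zero_le_one)
      (mul_nonneg (abs_nonneg _) (abs_nonneg _)) (hCHc j a ω)
  have hintB : ∀ j a, Integrable (fun ω => (w j a ω / π a ω) *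
      ({a} : Set (Fin m → Bool)).indicator 1 (A ω)) μ := by
    intro j a
    refine integrable_of_bdd (((hwmeas j a).div (hπmeas' a)).mul (hgmeas a))
      (C := ((CH + CH) / c) * 1) (fun ω => ?_)
    rw [abs_mul]
    exact mul_le_mul (hdivb j a ω) (hgb a ω) (abs_nonneg _) (hCHc j a ω)
  have hwint : ∀ j a, Integrable (w j a) μ := fun j a =>
    integrable_of_bdd (hwmeas j a) (hwb j a)
  have hwfint : ∀ j a, Integrable (fun ω => w j a ω *
      (if Y a ω j ≤ θ then (1:ℝ) else 0)) μ := by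
    intro j a
    have hif : Measurable[mΩ] (fun ω => if Y a ω j ≤ θ then (1:ℝ) else 0) := by
      have : (fun ω => if Y a ω j ≤ θ then (1:ℝ) else 0)
          = fun ω => (S j).indicator (1 : (Fin m → ℝ) → ℝ) (Y a ω) :=
        funext fun ω => (ind_f j a ω).symm
      rw [this]; exact hfmeas j a
    refine integrable_of_bdd ((hwmeas j a).mul hif) (C := (CH + CH) * 1) (fun ω => ?_)
    rw [abs_mul]
    refine mul_le_mul (hwb j a ω) ?_ (abs_nonneg _)
      (le_trans (abs_nonneg _) (hwb j a ω))
    split <;> simp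
  -- per-term identity
  have term_eq : ∀ j a, ∫ ω, (if A ω = a then (1:ℝ) else 0) * w j a ω *
        ((if Y a ω j ≤ θ then (1:ℝ) else 0) - q) / π a ω ∂μ
      = (∫ ω, w j a ω * (if Y a ω j ≤ θ then (1:ℝ) else 0) ∂μ)
        - q * ∫ ω, w j a ω ∂μ := by
    intro j a
    have hsplit : (fun ω => (if A ω = a then (1:ℝ) else 0) * w j a ω *
          ((if Y a ω j ≤ θ then (1:ℝ) else 0) - q) / π a ω)
        = fun ω => (w j a ω / π a ω) *
            ((S j).indicator 1 (Y a ω) * ({a} : Set (Fin m → Bool)).indicator 1 (A ω))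
          - q * ((w j a ω / π a ω) * ({a} : Set (Fin m → Bool)).indicator 1 (A ω)) := by
      funext ω
      rw [ind_f, ind_g]
      simp only [div_eq_mul_inv]
      ring
    rw [hsplit, integral_sub (hintA j a) ((hintB j a).const_mul q),
      integral_const_mul, key1 j a, key2 j a]
    have : (fun ω => w j a ω * (S j).indicator 1 (Y a ω))
        = fun ω => w j a ω * (if Y a ω j ≤ θ then (1:ℝ) else 0) :=
      funext fun ω => by rw [ind_f]
    rw [this]
  -- integrability of raw terms
  have hTmeas : ∀ j a, Measurable[mΩ] (fun ω => (if A ω = a then (1:ℝ) else 0) * w j a ω *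
      ((if Y a ω j ≤ θ then (1:ℝ) else 0) - q) / π a ω) := by
    intro j a
    have h1 : Measurable[mΩ] (fun ω => if A ω = a then (1:ℝ) else 0) := by
      have : (fun ω => if A ω = a then (1:ℝ) else 0)
          = fun ω => ({a} : Set (Fin m → Bool)).indicator 1 (A ω) :=
        funext fun ω => (ind_g a ω).symm
      rw [this]; exact hgmeas a
    have h2 : Measurable[mΩ] (fun ω => if Y a ω j ≤ θ then (1:ℝ) else 0) := by
      have : (fun ω => if Y a ω j ≤ θ then (1:ℝ) else 0)
          = fun ω => (S j).indicator (1 : (Fin m → ℝ) → ℝ) (Y a ω) :=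
        funext fun ω => (ind_f j a ω).symm
      rw [this]; exact hfmeas j a
    exact ((h1.mul (hwmeas j a)).mul (h2.sub measurable_const)).div (hπmeas' a)
  have hTb : ∀ j a ω, |(if A ω = a then (1:ℝ) else 0) * w j a ω *
      ((if Y a ω j ≤ θ then (1:ℝ) else 0) - q) / π a ω| ≤ 1 * (CH + CH) * (1 + |q|) / c := by
    intro j a ω
    rw [abs_div, abs_of_pos (hπpos a ω), abs_mul, abs_mul]
    refine div_le_div₀ ?_ ?_ hc (hπc a ω)
    · have h0 : 0 ≤ CH + CH := le_trans (abs_nonneg _) (hwb j a ω)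
      have h1 : 0 ≤ 1 + |q| := by positivity
      nlinarith
    · refine mul_le_mul (mul_le_mul ?_ (hwb j a ω) (abs_nonneg _) zero_le_one) ?_
        (abs_nonneg _) ?_
      · split <;> simp
      · calc |(if Y a ω j ≤ θ then (1:ℝ) else 0) - q|
            ≤ |(if Y a ω j ≤ θ then (1:ℝ) else 0)| + |q| := abs_sub _ _
          _ ≤ 1 + |q| := by
              refine add_le_add ?_ le_rfl
              split <;> simp
      · exact mul_nonneg zero_le_one (le_trans (abs_nonneg _) (hwb j a ω))
  have hTint : ∀ j a, Integrable (fun ω => (if A ω = a then (1:ℝ) else 0) * w j a ω *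
      ((if Y a ω j ≤ θ then (1:ℝ) else 0) - q) / π a ω) μ := fun j a =>
    integrable_of_bdd (hTmeas j a) (hTb j a)
  -- pointwise rewriting of LHS integrand
  have hpt : (fun ω => (1 / (m : ℝ)) * ∑ j : Fin m, ∑ a : Fin m → Bool,
        (if A ω = a then (1 : ℝ) else 0) *
          ((if a j = t then (1 : ℝ) else 0) * w j a ω) *
          ((if Y (A ω) ω j ≤ θ then (1 : ℝ) else 0) - q) / π a ω)
      = fun ω => (1 / (m : ℝ)) * ∑ j : Fin m,
          ∑ a ∈ univ.filter (fun a : Fin m → Bool => a j = t),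
          (if A ω = a then (1:ℝ) else 0) * w j a ω *
            ((if Y a ω j ≤ θ then (1:ℝ) else 0) - q) / π a ω := by
    funext ω
    congr 1
    refine Finset.sum_congr rfl fun j _ => ?_
    rw [Finset.sum_filter]
    refine Finset.sum_congr rfl fun a _ => ?_
    by_cases hat : a j = t
    · by_cases hAa : A ω = a
      · rw [hAa]; simp [hat]
      · simp [hat, hAa]
    · simp [hat]
  -- the q-part sums to one
  have hqj : ∀ j : Fin m, ∑ a ∈ univ.filter (fun a : Fin m → Bool => a j = t),
      ∫ ω, w j a ω ∂μ = 1 := by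
    intro j
    rw [← integral_finset_sum _ (fun a _ => hwint j a)]
    have : (fun ω => ∑ a ∈ univ.filter (fun a : Fin m → Bool => a j = t), w j a ω)
        = fun _ => (1:ℝ) := by
      funext ω
      rw [show (fun a => w j a ω) = fun a : Fin m → Bool =>
        ((fun b => H b ω) (Function.update a j true) + (fun b => H b ω) (Function.update a j false))
        from rfl]
      rw [wsum_aux (fun b => H b ω) j t]
      exact hHsum ω
    rw [this]
    simp
  -- compute both sides
  rw [hpt]
  rw [integral_const_mul, integral_finset_sum _ (fun j _ =>
    integrable_finset_sum _ (fun a _ => hTint j a))]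
  rw [integral_const_mul, integral_finset_sum _ (fun j _ =>
    integrable_finset_sum _ (fun a _ => hwfint j a))]
  have step : ∀ j : Fin m, ∫ ω, (∑ a ∈ univ.filter (fun a : Fin m → Bool => a j = t),
        (if A ω = a then (1:ℝ) else 0) * w j a ω *
          ((if Y a ω j ≤ θ then (1:ℝ) else 0) - q) / π a ω) ∂μ
      = (∫ ω, ∑ a ∈ univ.filter (fun a : Fin m → Bool => a j = t),
          w j a ω * (if Y a ω j ≤ θ then (1:ℝ) else 0) ∂μ) - q := by
    intro j
    rw [integral_finset_sum _ (fun a _ => hTint j a),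
      integral_finset_sum _ (fun a _ => hwfint j a)]
    have : ∀ a ∈ univ.filter (fun a : Fin m → Bool => a j = t),
        ∫ ω, (if A ω = a then (1:ℝ) else 0) * w j a ω *
          ((if Y a ω j ≤ θ then (1:ℝ) else 0) - q) / π a ω ∂μ
        = (∫ ω, w j a ω * (if Y a ω j ≤ θ then (1:ℝ) else 0) ∂μ)
          - q * ∫ ω, w j a ω ∂μ := fun a _ => term_eq j a
    rw [Finset.sum_congr rfl this, Finset.sum_sub_distrib, ← Finset.mul_sum, hqj j, mul_one]
  rw [Finset.sum_congr rfl (fun j _ => step j), Finset.sum_sub_distrib, Finset.sum_const,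
    Finset.card_univ, Fintype.card_fin, nsmul_eq_mul, mul_sub]
  congr 1
  rw [← mul_assoc]
  rw [one_div, inv_mul_cancel₀ (ne_of_gt hmR), one_mul]
end

section
/- Let (Ω, ℱ, μ) be a probability space, 𝔪 ⊆ ℱ a sub-σ-algebra, 𝒜 a finite nonempty type, and A : Ω → 𝒜 a measurable map. Let π : 𝒜 → Ω → ℝ be such that for each a' ∈ 𝒜, π(a') is an 𝔪-measurable version of the conditional expectation μ[1{A = a'} | 𝔪] with π(a')(ω) ≥ c for a constant c > 0 and all ω, and let H : 𝒜 → Ω → ℝ be such that each H(a') is 𝔪-measurable and bounded with Σ_{a'∈𝒜} H(a')(ω) = 1 for all ω. Fix a ∈ 𝒜 and define Ω_a(ω) := H(a)(ω)·( 1{A(ω) = a}/π(a)(ω) − H(A(ω))(ω)/π(A(ω))(ω) ). Then μ[Ω_a | 𝔪] = 0 almost everywhere. -/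
open MeasureTheory ProbabilityTheory

/-- The conditional efficient influence function of the cluster-level incremental
propensity score policy has conditional mean zero given `𝔪`: with `π(a')` an
`𝔪`-measurable version of `μ[1{A = a'} | 𝔪]` bounded below by `c > 0`, `H(a')`
`𝔪`-measurable and bounded with `∑_{a'} H(a')(ω) = 1`, and
`Ω_a(ω) = H(a)(ω)(1{A ω = a}/π(a)(ω) − H(A ω)(ω)/π(A ω)(ω))`, one has
`μ[Ω_a | 𝔪] = 0` almost everywhere. -/
theorem cps_conditional_eif_mean_zero {Ω : Type*} (𝔪 : MeasurableSpace Ω) [mΩ : MeasurableSpace Ω]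
    (μ : Measure Ω) [IsProbabilityMeasure μ]
    (h𝔪 : 𝔪 ≤ mΩ)
    {𝒜 : Type*} [Fintype 𝒜] [Nonempty 𝒜] [DecidableEq 𝒜] [MeasurableSpace 𝒜]
    [MeasurableSingletonClass 𝒜]
    (A : Ω → 𝒜) (hA : Measurable A)
    (π : 𝒜 → Ω → ℝ) (hπmeas : ∀ a', Measurable[𝔪] (π a'))
    (hπver : ∀ a' : 𝒜, π a' =ᵐ[μ] μ[fun ω => if A ω = a' then (1 : ℝ) else 0 | 𝔪])
    (c : ℝ) (hc : 0 < c) (hπc : ∀ a' ω, c ≤ π a' ω)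
    (H : 𝒜 → Ω → ℝ) (hHmeas : ∀ a', Measurable[𝔪] (H a'))
    (CH : ℝ) (hHb : ∀ a' ω, |H a' ω| ≤ CH)
    (hHsum : ∀ ω, ∑ a' : 𝒜, H a' ω = 1)
    (a : 𝒜) :
    μ[fun ω => H a ω *
        ((if A ω = a then (1 : ℝ) else 0) / π a ω - H (A ω) ω / π (A ω) ω) | 𝔪]
      =ᵐ[μ] 0 := by
  classical
  have hπpos : ∀ a' ω, 0 < π a' ω := fun a' ω => lt_of_lt_of_le hc (hπc a' ω)
  set g : 𝒜 → Ω → ℝ := fun a' ω =>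
    H a ω * ((if a' = a then (1 : ℝ) else 0) / π a ω - H a' ω / π a' ω) with hgdef
  set F : 𝒜 → Ω → ℝ := fun a' ω => g a' ω * (if A ω = a' then (1 : ℝ) else 0) with hFdef
  have hgmeas : ∀ a', StronglyMeasurable[𝔪] (g a') := fun a' =>
    ((hHmeas a).mul ((measurable_const.div (hπmeas a)).sub
      ((hHmeas a').div (hπmeas a')))).stronglyMeasurable
  have hindmeas : ∀ a', Measurable (fun ω => if A ω = a' then (1 : ℝ) else 0) := fun a' =>
    Measurable.ite (hA (measurableSet_singleton a')) measurable_const measurable_const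
  have hCH : ∀ a' ω, |H a' ω| ≤ |CH| := fun a' ω => (hHb a' ω).trans (le_abs_self CH)
  set C : ℝ := |CH| * (1 / c + |CH| / c) with hCdef
  have hgb : ∀ a' ω, |g a' ω| ≤ C := by
    intro a' ω
    have h1 : |(if a' = a then (1 : ℝ) else 0) / π a ω| ≤ 1 / c := by
      rw [abs_div, abs_of_pos (hπpos a ω)]
      refine div_le_div₀ (by positivity) ?_ hc (hπc a ω)
      split <;> simp
    have h2 : |H a' ω / π a' ω| ≤ |CH| / c := by
      rw [abs_div, abs_of_pos (hπpos a' ω)]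
      exact div_le_div₀ (abs_nonneg _) (hCH a' ω) hc (hπc a' ω)
    calc |g a' ω| ≤ |H a ω| *
          (|(if a' = a then (1 : ℝ) else 0) / π a ω| + |H a' ω / π a' ω|) := by
          rw [abs_mul]
          exact mul_le_mul_of_nonneg_left (abs_sub _ _) (abs_nonneg _)
      _ ≤ |CH| * (1 / c + |CH| / c) :=
          mul_le_mul (hCH a ω) (add_le_add h1 h2) (by positivity) (abs_nonneg _)
  have hindb : ∀ a' ω, |(if A ω = a' then (1 : ℝ) else 0)| ≤ 1 := by
    intro a' ω; split <;> simp
  have hindint : ∀ a', Integrable (fun ω => if A ω = a' then (1 : ℝ) else 0) μ := by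
    intro a'
    refine (integrable_const (1 : ℝ)).mono' (hindmeas a').aestronglyMeasurable
      (ae_of_all _ fun ω => ?_)
    simpa using hindb a' ω
  have hFint : ∀ a', Integrable (F a') μ := by
    intro a'
    refine (integrable_const C).mono'
      (((((hgmeas a').measurable.mono h𝔪 le_rfl).mul (hindmeas a'))).aestronglyMeasurable)
      (ae_of_all _ fun ω => ?_)
    calc ‖F a' ω‖ = |g a' ω| * |(if A ω = a' then (1 : ℝ) else 0)| := by
          simp only [hFdef, Real.norm_eq_abs, abs_mul]
      _ ≤ C * 1 := mul_le_mul (hgb a' ω) (hindb a' ω) (abs_nonneg _)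
          ((abs_nonneg (g a' ω)).trans (hgb a' ω))
      _ = C := mul_one C
  have key : ∀ a', μ[F a'|𝔪] =ᵐ[μ] fun ω => g a' ω * π a' ω := by
    intro a'
    have h := condExp_mul_of_stronglyMeasurable_left (hgmeas a')
      (by simpa [hFdef, Pi.mul_def] using hFint a') (hindint a')
    have h' : μ[F a'|𝔪] =ᵐ[μ] g a' * μ[fun ω => if A ω = a' then (1 : ℝ) else 0|𝔪] := by
      simpa [hFdef, Pi.mul_def] using h
    refine h'.trans ?_
    filter_upwards [hπver a'] with ω hω
    simp [Pi.mul_apply, ← hω]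
  have hrw : (fun ω => H a ω *
      ((if A ω = a then (1 : ℝ) else 0) / π a ω - H (A ω) ω / π (A ω) ω))
      = ∑ a' : 𝒜, F a' := by
    funext ω
    simp only [Finset.sum_apply, hFdef, mul_ite, mul_one, mul_zero,
      Finset.sum_ite_eq, Finset.mem_univ, if_true, hgdef]
  have hzero : ∀ ω, ∑ a' : 𝒜, g a' ω * π a' ω = 0 := by
    intro ω
    have hterm : ∀ a', g a' ω * π a' ω
        = (if a' = a then H a ω else 0) - H a ω * H a' ω := by
      intro a'
      have hpa := (hπpos a ω).ne'
      have hpa' := (hπpos a' ω).ne'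
      simp only [hgdef]
      split
      · rename_i h; subst h; field_simp
      · field_simp; ring
    rw [Finset.sum_congr rfl (fun a' _ => hterm a'), Finset.sum_sub_distrib,
      Finset.sum_ite_eq' Finset.univ a (fun _ => H a ω), ← Finset.mul_sum, hHsum ω]
    simp
  rw [hrw]
  calc μ[∑ a' : 𝒜, F a'|𝔪] =ᵐ[μ] ∑ a' : 𝒜, μ[F a'|𝔪] :=
        condExp_finsetSum (fun a' _ => hFint a') 𝔪
    _ =ᵐ[μ] fun ω => ∑ a' : 𝒜, g a' ω * π a' ω := by
        have hall : ∀ᵐ ω ∂μ, ∀ a', (μ[F a'|𝔪]) ω = g a' ω * π a' ω :=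
          ae_all_iff.2 fun a' => key a'
        filter_upwards [hall] with ω hω
        rw [Finset.sum_apply]
        exact Finset.sum_congr rfl fun a' _ => hω a'
    _ =ᵐ[μ] 0 := ae_of_all _ fun ω => by simpa using hzero ω
end

section
/- Let (Ω, ℱ, μ) be a probability space and Y : Ω → ℝ a random variable with cumulative distribution function F(t) := μ({ω : Y(ω) ≤ t}). Suppose F is twice differentiable on ℝ with |F''(t)| ≤ B for all t ∈ ℝ. Let φ : ℝ → ℝ be a nonnegative measurable even function with ∫ φ(u) du = 1 and κ := ∫ u²·φ(u) du < ∞, and let Φ(x) := ∫_{−∞}^{x} φ(u) du. Then for every θ ∈ ℝ and every h > 0, | ∫ Φ((θ − Y(ω))/h) dμ(ω) − F(θ) | ≤ (B·κ/2)·h². -/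
/-!
Substituting `u = (θ - y)/h` and applying Fubini turns the smoothed CDF into the kernel average
`∫ F(θ - h u) φ(u) du`. Since `φ` has mass one and, being even, zero first moment, subtracting
`F θ` leaves only the second-order Taylor remainder of `F` at `θ`, which is at most
`B/2 · h² u²` pointwise; integrating against `φ` gives `B κ h² / 2`.
-/

open MeasureTheory Set

section Taylor

variable {g g' : ℝ → ℝ} {a C : ℝ}

lemma abs_sub_le_of_abs_deriv_le_mul_abs_sub_of_le (hg : ∀ t, HasDerivAt g (g' t) t)
    (hg' : ∀ t, |g' t| ≤ C * |t - a|) {x : ℝ} (hax : a ≤ x) :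
    |g x - g a| ≤ C / 2 * (x - a) ^ 2 := by
  -- Comparing with the barrier `C/2 (t - a)²`, not a constant bound, is what keeps the `1/2`.
  have hbarrier : ∀ t, HasDerivAt (fun t => C / 2 * (t - a) ^ 2) (C * (t - a)) t := fun t => by
    refine ((((hasDerivAt_id t).sub_const a).pow 2).const_mul (C / 2)).congr_deriv ?_
    simp only [id]
    ring
  refine image_norm_le_of_norm_deriv_right_le_deriv_boundary (f := fun t => g t - g a)
    (fun t _ => ((hg t).sub_const _).continuousAt.continuousWithinAt)
    (fun t _ => ((hg t).sub_const _).hasDerivWithinAt) (by simp) hbarrier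
    (fun t ht => ?_) ⟨hax, le_rfl⟩
  simpa [abs_of_nonneg (sub_nonneg.2 ht.1)] using hg' t

lemma abs_sub_le_of_abs_deriv_le_mul_abs_sub (hg : ∀ t, HasDerivAt g (g' t) t)
    (hg' : ∀ t, |g' t| ≤ C * |t - a|) (x : ℝ) : |g x - g a| ≤ C / 2 * (x - a) ^ 2 := by
  rcases le_total a x with hax | hxa
  · exact abs_sub_le_of_abs_deriv_le_mul_abs_sub_of_le hg hg' hax
  · have hg_neg : ∀ t, HasDerivAt (fun t => g (-t)) (-g' (-t)) t := fun t => by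
      refine ((hg (-t)).comp t (hasDerivAt_neg t)).congr_deriv ?_
      ring
    have hg'_neg : ∀ t, |-g' (-t)| ≤ C * |t - -a| := fun t => by
      rw [abs_neg, show t - -a = -(-t - a) by ring, abs_neg]
      exact hg' (-t)
    have := abs_sub_le_of_abs_deriv_le_mul_abs_sub_of_le hg_neg hg'_neg (neg_le_neg hxa)
    rwa [neg_neg, neg_neg, neg_sub_neg, sub_sq_comm] at this

end Taylor

theorem abs_sub_sub_mul_le_of_abs_deriv2_le {F F' F'' : ℝ → ℝ}
    (hF' : ∀ t, HasDerivAt F (F' t) t) (hF'' : ∀ t, HasDerivAt F' (F'' t) t)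
    {B : ℝ} (hB : ∀ t, |F'' t| ≤ B) (a x : ℝ) :
    |F x - F a - F' a * (x - a)| ≤ B / 2 * (x - a) ^ 2 := by
  have hlip : ∀ t, |F' t - F' a| ≤ B * |t - a| := fun t => by
    simpa [Real.norm_eq_abs] using convex_univ.norm_image_sub_le_of_norm_hasDerivWithin_le
      (fun t _ => (hF'' t).hasDerivWithinAt) (fun t _ => by simpa using hB t)
      (mem_univ a) (mem_univ t)
  have hg : ∀ t, HasDerivAt (fun t => F t - F' a * (t - a)) (F' t - F' a) t := fun t => by
    refine ((hF' t).sub (((hasDerivAt_id t).sub_const a).const_mul (F' a))).congr_deriv ?_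
    ring
  have := abs_sub_le_of_abs_deriv_le_mul_abs_sub hg hlip x
  rwa [sub_self, mul_zero, sub_zero, sub_right_comm] at this

lemma integral_mul_eq_zero_of_even {φ : ℝ → ℝ} (hφ : ∀ u, φ (-u) = φ u) :
    ∫ u, u * φ u = 0 := by
  have h := integral_neg_eq_self (fun u => u * φ u) volume
  simp only [hφ, neg_mul, integral_neg] at h
  linarith

lemma MeasureTheory.Integrable.id_mul_of_sq_mul {φ : ℝ → ℝ} (hφ : Integrable φ)
    (hφ2 : Integrable fun u => u ^ 2 * φ u) : Integrable fun u => u * φ u := by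
  refine (hφ.norm.add hφ2.norm).mono' (continuous_id.aestronglyMeasurable.mul hφ.1)
    (ae_of_all _ fun u => ?_)
  have habs : |u| ≤ 1 + u ^ 2 := by nlinarith [sq_abs u, sq_nonneg (|u| - 1)]
  simp only [Real.norm_eq_abs, abs_mul, Pi.add_apply, abs_pow, sq_abs]
  nlinarith [mul_le_mul_of_nonneg_right habs (abs_nonneg (φ u))]

theorem abs_integral_comp_sub_mul_mul_sub_le {F F' F'' : ℝ → ℝ}
    (hF' : ∀ t, HasDerivAt F (F' t) t) (hF'' : ∀ t, HasDerivAt F' (F'' t) t)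
    {B : ℝ} (hB : ∀ t, |F'' t| ≤ B) {φ : ℝ → ℝ} (hφnn : ∀ u, 0 ≤ φ u)
    (hφeven : ∀ u, φ (-u) = φ u) (hφint : Integrable φ) (hφ1 : ∫ u, φ u = 1)
    (hκint : Integrable fun u => u ^ 2 * φ u) (θ h : ℝ) :
    |(∫ u, F (θ - h * u) * φ u) - F θ| ≤ B * (∫ u, u ^ 2 * φ u) / 2 * h ^ 2 := by
  set R : ℝ → ℝ := fun u => F (θ - h * u) - F θ - F' θ * (θ - h * u - θ)
  have hR : ∀ u, |R u * φ u| ≤ B / 2 * h ^ 2 * (u ^ 2 * φ u) := fun u => by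
    rw [abs_mul, abs_of_nonneg (hφnn u)]
    calc |R u| * φ u ≤ B / 2 * (θ - h * u - θ) ^ 2 * φ u :=
          mul_le_mul_of_nonneg_right
            (abs_sub_sub_mul_le_of_abs_deriv2_le hF' hF'' hB θ (θ - h * u)) (hφnn u)
      _ = B / 2 * h ^ 2 * (u ^ 2 * φ u) := by ring
  have hRcont : Continuous R := by
    have hFcont : Continuous F := continuous_iff_continuousAt.2 fun t => (hF' t).continuousAt
    fun_prop
  have hRint : Integrable fun u => R u * φ u :=
    (hκint.const_mul _).mono' (hRcont.aestronglyMeasurable.mul hφint.1) (ae_of_all _ hR)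
  have hlinint := hφint.id_mul_of_sq_mul hκint
  have hsplit : (∫ u, F (θ - h * u) * φ u) - F θ = ∫ u, R u * φ u := by
    have hexpand : (fun u => F (θ - h * u) * φ u)
        = fun u => R u * φ u + F θ * φ u - F' θ * h * (u * φ u) := by
      funext u; ring
    have hRint' : Integrable fun u => R u * φ u + F θ * φ u := hRint.add (hφint.const_mul _)
    rw [hexpand, integral_sub hRint' (hlinint.const_mul _),
      integral_add hRint (hφint.const_mul _), integral_const_mul, integral_const_mul, hφ1,
      integral_mul_eq_zero_of_even hφeven]
    ring
  calc |(∫ u, F (θ - h * u) * φ u) - F θ| = |∫ u, R u * φ u| := by rw [hsplit]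
    _ ≤ ∫ u, |R u * φ u| := abs_integral_le_integral_abs
    _ ≤ ∫ u, B / 2 * h ^ 2 * (u ^ 2 * φ u) := integral_mono hRint.abs (hκint.const_mul _) hR
    _ = B * (∫ u, u ^ 2 * φ u) / 2 * h ^ 2 := by rw [integral_const_mul]; ring

lemma integral_setIntegral_Iic_eq_integral_measureReal_mul {Ω : Type*} [MeasurableSpace Ω]
    (μ : Measure Ω) [IsFiniteMeasure μ] {g : Ω → ℝ} (hg : Measurable g) {φ : ℝ → ℝ}
    (hφ : Integrable φ) :
    ∫ ω, (∫ u in Iic (g ω), φ u) ∂μ = ∫ u, μ.real {ω | u ≤ g ω} * φ u := by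
  set S : Set (Ω × ℝ) := {p | p.2 ≤ g p.1}
  have hS : MeasurableSet S := measurableSet_le measurable_snd (hg.comp measurable_fst)
  have hint : Integrable (S.indicator fun p => φ p.2) (μ.prod volume) :=
    (hφ.comp_snd μ).indicator hS
  calc ∫ ω, (∫ u in Iic (g ω), φ u) ∂μ
        = ∫ ω, (∫ u, S.indicator (fun p => φ p.2) (ω, u)) ∂μ := by
        simp_rw [← integral_indicator measurableSet_Iic]
        rfl
    _ = ∫ u, ∫ ω, S.indicator (fun p => φ p.2) (ω, u) ∂μ :=
        integral_integral_swap (f := fun ω u => S.indicator (fun p => φ p.2) (ω, u)) hint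
    _ = ∫ u, μ.real {ω | u ≤ g ω} * φ u := by
        congr with u
        exact integral_indicator_const (φ u) (measurableSet_le measurable_const hg)

theorem smoothing_bias_bound_general {Ω : Type*} [MeasurableSpace Ω]
    (μ : Measure Ω) [IsProbabilityMeasure μ]
    (Y : Ω → ℝ) (hY : Measurable Y)
    (F F' F'' : ℝ → ℝ)
    (hF : ∀ t, F t = (μ {ω | Y ω ≤ t}).toReal)
    (hF' : ∀ t, HasDerivAt F (F' t) t)
    (hF'' : ∀ t, HasDerivAt F' (F'' t) t)
    (B : ℝ) (hB : ∀ t, |F'' t| ≤ B)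
    (φ : ℝ → ℝ) (hφnn : ∀ u, 0 ≤ φ u)
    (hφeven : ∀ u, φ (-u) = φ u)
    (hφint : Integrable φ) (hφ1 : ∫ u, φ u = 1)
    (hκint : Integrable (fun u => u ^ 2 * φ u))
    (θ h : ℝ) (hh : 0 < h) :
    |(∫ ω, (∫ u in Set.Iic ((θ - Y ω) / h), φ u) ∂μ) - F θ|
      ≤ B * (∫ u, u ^ 2 * φ u) / 2 * h ^ 2 := by
  have hcdf : ∀ u, μ.real {ω | u ≤ (θ - Y ω) / h} = F (θ - h * u) := fun u => by
    have hset : {ω | u ≤ (θ - Y ω) / h} = {ω | Y ω ≤ θ - h * u} := by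
      ext ω
      change u ≤ (θ - Y ω) / h ↔ Y ω ≤ θ - h * u
      rw [le_div_iff₀ hh]
      constructor <;> intro <;> linarith
    rw [hset, hF, Measure.real]
  rw [integral_setIntegral_Iic_eq_integral_measureReal_mul μ (g := fun ω => (θ - Y ω) / h)
    (by fun_prop) hφint]
  simp_rw [hcdf]
  exact abs_integral_comp_sub_mul_mul_sub_le hF' hF'' hB hφnn hφeven hφint hφ1 hκint θ h

/-- Smoothing-bias bound of order `h²`: if the CDF `F` of `Y` is twice differentiable
with `|F''| ≤ B`, and `φ` is a nonnegative measurable even kernel integrating to one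
with finite second moment `κ = ∫ u² φ(u) du`, and `Φ(x) = ∫_{-∞}^x φ(u) du`, then for
every `θ` and bandwidth `h > 0`,
`|∫ Φ((θ − Y)/h) dμ − F(θ)| ≤ (B κ / 2) h²`. -/
theorem smoothing_bias_bound {Ω : Type*} [MeasurableSpace Ω]
    (μ : Measure Ω) [IsProbabilityMeasure μ]
    (Y : Ω → ℝ) (hY : Measurable Y)
    (F F' F'' : ℝ → ℝ)
    (hF : ∀ t, F t = (μ {ω | Y ω ≤ t}).toReal)
    (hF' : ∀ t, HasDerivAt F (F' t) t)
    (hF'' : ∀ t, HasDerivAt F' (F'' t) t)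
    (B : ℝ) (hB : ∀ t, |F'' t| ≤ B)
    (φ : ℝ → ℝ) (hφmeas : Measurable φ) (hφnn : ∀ u, 0 ≤ φ u)
    (hφeven : ∀ u, φ (-u) = φ u)
    (hφint : Integrable φ) (hφ1 : ∫ u, φ u = 1)
    (hκint : Integrable (fun u => u ^ 2 * φ u))
    (θ h : ℝ) (hh : 0 < h) :
    |(∫ ω, (∫ u in Set.Iic ((θ - Y ω) / h), φ u) ∂μ) - F θ|
      ≤ B * (∫ u, u ^ 2 * φ u) / 2 * h ^ 2 :=
  smoothing_bias_bound_general μ Y hY F F' F'' hF hF' hF'' B hB φ hφnn hφeven hφint hφ1 hκint θ h hh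
end
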